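/- arXiv:1502.06531 — 9 statements merged into one kernel-verified Lean document; each statement's English description precedes it below -/
import Mathlib

section
/- Let F : 2^V → ℝ be submodular with F(∅)=0, and let s : 2^V → ℝ be a modular function with s(A) ≤ F(A) for all A ⊆ V. Then log ∑_{A⊆V} exp(-F(A)) ≤ ∑_{i∈V} log(1 + exp(-s_i)). -/
/-- A set function is submodular iff it has diminishing marginal gains. -/
def Submodular {V : Type*} [DecidableEq V] (F : Finset V → ℝ) : Prop :=
  ∀ A B : Finset V, A ⊆ B → ∀ x ∉ B,
    F (insert x B) - F B ≤ F (insert x A) - F A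

/-- If `F` is submodular with `F ∅ = 0` and the modular function
`s(A) = ∑_{i∈A} qᵢ` is a lower bound of `F`, then
`log ∑_{A⊆V} exp(-F(A)) ≤ ∑_{i∈V} log(1 + exp(-qᵢ))`. -/
theorem stmt_2 {V : Type*} [Fintype V] [DecidableEq V]
    (F : Finset V → ℝ) (hsub : Submodular F) (hF0 : F ∅ = 0)
    (q : V → ℝ) (hlb : ∀ A : Finset V, ∑ i ∈ A, q i ≤ F A) :
    Real.log (∑ A : Finset V, Real.exp (-(F A)))
      ≤ ∑ i : V, Real.log (1 + Real.exp (-(q i))) := by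
  have key : (∑ A : Finset V, Real.exp (-(F A)))
      ≤ ∏ i : V, (1 + Real.exp (-(q i))) := by
    have h1 : ∀ A : Finset V, Real.exp (-(F A)) ≤ ∏ i ∈ A, Real.exp (-(q i)) := by
      intro A
      rw [← Real.exp_sum]
      apply Real.exp_le_exp.mpr
      simpa using neg_le_neg (hlb A)
    calc (∑ A : Finset V, Real.exp (-(F A)))
        ≤ ∑ A : Finset V, ∏ i ∈ A, Real.exp (-(q i)) :=
          Finset.sum_le_sum (fun A _ => h1 A)
      _ = ∏ i : V, (1 + Real.exp (-(q i))) := by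
          simp_rw [add_comm (1:ℝ)]
          rw [Finset.prod_add, ← Finset.powerset_univ]
          refine Finset.sum_congr rfl (fun A _ => by simp)
  have hpos : (0:ℝ) < ∑ A : Finset V, Real.exp (-(F A)) := by
    apply Finset.sum_pos (fun A _ => Real.exp_pos _)
    exact ⟨∅, Finset.mem_univ _⟩
  calc Real.log (∑ A : Finset V, Real.exp (-(F A)))
      ≤ Real.log (∏ i : V, (1 + Real.exp (-(q i)))) := Real.log_le_log hpos key
    _ = ∑ i : V, Real.log (1 + Real.exp (-(q i))) := by
        apply Real.log_prod
        intro i _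
        positivity
end

section
/- Let F : 2^V → ℝ be submodular with F(∅)=0 and let w_i > 0 for all i ∈ V and y ∈ ℝ^V. Then the two convex programs minimize ∑_{i∈V} w_i (x_i − y_i)^2 and minimize ∑_{i∈V} (1/w_i) log(exp(−w_i x_i) + exp(−w_i y_i)), both subject to x ∈ B(F), have the same optimal solution x*. -/
/-- The base polytope `B(F)` of a normalized submodular function. -/
def basePolytope {V : Type*} [Fintype V] [DecidableEq V] (F : Finset V → ℝ) :
    Set (V → ℝ) :=
  {s | (∀ A : Finset V, ∑ i ∈ A, s i ≤ F A) ∧ ∑ i : V, s i = F Finset.univ}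


/-!
Both objectives are separable, convex and differentiable, so `x ∈ B(F)` minimizes either one
iff it minimizes the linear function `z ↦ ⟨∇f(x), z⟩` over `B(F)`. Summation by parts over the
level sets of `c` (with the greedy vector as a competitor) shows that a base minimizes `⟨c, ·⟩`
iff it is tight on every sublevel set `{i | c i ≤ c j}`, a condition that only depends on the
order of the coordinates of `c`. The two gradients, `2 wᵢ (xᵢ - yᵢ)` and `σ(wᵢ (xᵢ - yᵢ)) - 1`
with `σ` the logistic sigmoid, are increasing functions of the same quantity `wᵢ (xᵢ - yᵢ)`.
-/

open Finset Real

section Greedy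

variable {V K : Type*} [Fintype V] [DecidableEq V] [LinearOrder K]

def greedyVector (F : Finset V → ℝ) (κ : V → K) (i : V) : ℝ :=
  F {j | κ j ≤ κ i} - F {j | κ j < κ i}

lemma filter_le_eq_insert_filter_lt {κ : V → K} (hκ : Function.Injective κ) (a : V) :
    ({j | κ j ≤ κ a} : Finset V) = insert a ({j | κ j < κ a} : Finset V) := by
  ext j
  simp [le_iff_lt_or_eq, hκ.eq_iff, or_comm]

lemma greedyVector_sum_le {F : Finset V → ℝ} (hsub : Submodular F) (hF0 : F ∅ = 0)
    {κ : V → K} (hκ : Function.Injective κ) (A : Finset V) :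
    ∑ i ∈ A, greedyVector F κ i ≤ F A := by
  induction A using Finset.induction_on_max_value κ with
  | empty => simp [hF0]
  | insert a A haA hmax ih =>
    have hA : A ⊆ ({j | κ j < κ a} : Finset V) := fun j hj => by
      simpa using (hmax j hj).lt_of_ne (hκ.ne (ne_of_mem_of_not_mem hj haA))
    have hmarginal := hsub A _ hA a (by simp)
    rw [← filter_le_eq_insert_filter_lt hκ] at hmarginal
    rw [sum_insert haA, greedyVector]
    linarith

lemma greedyVector_sum_eq {F : Finset V → ℝ} (hF0 : F ∅ = 0) {κ : V → K}
    (hκ : Function.Injective κ) (A : Finset V) (hA : ∀ i ∈ A, ∀ j, κ j ≤ κ i → j ∈ A) :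
    ∑ i ∈ A, greedyVector F κ i = F A := by
  induction A using Finset.induction_on_max_value κ with
  | empty => simp [hF0]
  | insert a A haA hmax ih =>
    have hlt : ({j | κ j < κ a} : Finset V) = A := by
      ext j
      simp only [mem_filter, mem_univ, true_and]
      refine ⟨fun hj => ?_, fun hj => (hmax j hj).lt_of_ne (hκ.ne (ne_of_mem_of_not_mem hj haA))⟩
      exact (mem_insert.mp (hA a (mem_insert_self a A) j hj.le)).resolve_left
        (by rintro rfl; simp at hj)
    have hA' : ∀ i ∈ A, ∀ j, κ j ≤ κ i → j ∈ A := fun i hi j hj => by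
      rw [← hlt] at hi ⊢
      simp only [mem_filter, mem_univ, true_and] at hi ⊢
      exact hj.trans_lt hi
    rw [sum_insert haA, ih hA', greedyVector, filter_le_eq_insert_filter_lt hκ, hlt]
    ring

lemma greedyVector_mem_basePolytope {F : Finset V → ℝ} (hsub : Submodular F) (hF0 : F ∅ = 0)
    {κ : V → K} (hκ : Function.Injective κ) : greedyVector F κ ∈ basePolytope F :=
  ⟨greedyVector_sum_le hsub hF0 hκ, greedyVector_sum_eq hF0 hκ univ (by simp)⟩

end Greedy

-- Ties of `c` are broken by an enumeration of `V`; the greedy vector of that order does the job.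
lemma exists_mem_basePolytope_sublevel_tight {V : Type*} [Fintype V] [DecidableEq V]
    {F : Finset V → ℝ} (hsub : Submodular F) (hF0 : F ∅ = 0) (c : V → ℝ) :
    ∃ g ∈ basePolytope F, ∀ θ, ∑ i ∈ {i | c i ≤ θ}, g i = F {i | c i ≤ θ} := by
  let κ : V → ℝ ×ₗ Fin (Fintype.card V) := fun i => toLex (c i, Fintype.equivFin V i)
  have hκ : Function.Injective κ := fun i j h => by
    simpa [κ] using congrArg (fun p => (ofLex p).2) h
  refine ⟨greedyVector F κ, greedyVector_mem_basePolytope hsub hF0 hκ, fun θ => ?_⟩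
  refine greedyVector_sum_eq hF0 hκ _ fun i hi j hj => ?_
  simp only [mem_filter, mem_univ, true_and] at hi ⊢
  exact (Prod.Lex.monotone_fst _ _ hj).trans hi


section LayerCake

variable {V : Type*} (c u : V → ℝ)

lemma sum_sub_mul_eq_of_le (s : Finset V) {θ : ℝ} (t : ℝ) (h : ∀ i ∈ s, c i ≤ θ) :
    ∑ i ∈ s, (c i - t) * u i = ∑ i ∈ s with c i < θ, (c i - θ) * u i + (θ - t) * ∑ i ∈ s, u i := by
  rw [sum_filter_of_ne fun i hi hne => (h i hi).lt_of_ne fun heq => hne (by simp [heq]),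
    mul_sum, ← sum_add_distrib]
  exact sum_congr rfl fun _ _ => by ring

lemma filter_filter_lt_le_of_lt (s : Finset V) {θ θ' : ℝ} (h : θ' < θ) :
    {i ∈ {i ∈ s | c i < θ} | c i ≤ θ'} = {i ∈ s | c i ≤ θ'} := by
  rw [filter_filter]
  exact filter_congr fun i _ => ⟨And.right, fun hi => ⟨hi.trans_lt h, hi⟩⟩

lemma sum_sub_mul_nonneg (T : Finset ℝ) :
    ∀ (s : Finset V) (t : ℝ), (∀ i ∈ s, c i ∈ T) → (∀ θ ∈ T, θ < t) →
      (∀ θ ∈ T, ∑ i ∈ s with c i ≤ θ, u i ≤ 0) → 0 ≤ ∑ i ∈ s, (c i - t) * u i := by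
  induction T using Finset.induction_on_max with
  | empty =>
    intro s t hs _ _
    simp [eq_empty_of_forall_notMem fun i hi => notMem_empty _ (hs i hi)]
  | insert θ T hθ ih =>
    intro s t hs ht hu
    have hle : ∀ i ∈ s, c i ≤ θ := fun i hi =>
      (mem_insert.mp (hs i hi)).elim le_of_eq fun h => (hθ _ h).le
    have hs' : ∀ i ∈ {i ∈ s | c i < θ}, c i ∈ T := fun i hi =>
      (mem_insert.mp (hs i (mem_filter.mp hi).1)).resolve_left (mem_filter.mp hi).2.ne
    have hu' : ∀ θ' ∈ T, ∑ i ∈ {i ∈ s | c i < θ} with c i ≤ θ', u i ≤ 0 := fun θ' hθ' => by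
      rw [filter_filter_lt_le_of_lt c s (hθ θ' hθ')]; exact hu θ' (mem_insert_of_mem hθ')
    have hlow := ih _ θ hs' hθ hu'
    have htop : ∑ i ∈ s, u i ≤ 0 := by
      simpa [filter_true_of_mem hle] using hu θ (mem_insert_self θ T)
    have hgap := ht θ (mem_insert_self θ T)
    rw [sum_sub_mul_eq_of_le c u s t hle]
    exact add_nonneg hlow (mul_nonneg_of_nonpos_of_nonpos (by linarith) htop)

lemma sum_sublevel_eq_zero (T : Finset ℝ) :
    ∀ (s : Finset V) (t : ℝ), (∀ i ∈ s, c i ∈ T) → (∀ θ ∈ T, θ < t) →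
      (∀ θ ∈ T, ∑ i ∈ s with c i ≤ θ, u i ≤ 0) → ∑ i ∈ s, (c i - t) * u i ≤ 0 →
      ∀ θ ∈ T, ∑ i ∈ s with c i ≤ θ, u i = 0 := by
  induction T using Finset.induction_on_max with
  | empty => simp
  | insert θ T hθ ih =>
    intro s t hs ht hu hsum
    have hle : ∀ i ∈ s, c i ≤ θ := fun i hi =>
      (mem_insert.mp (hs i hi)).elim le_of_eq fun h => (hθ _ h).le
    have hs' : ∀ i ∈ {i ∈ s | c i < θ}, c i ∈ T := fun i hi =>
      (mem_insert.mp (hs i (mem_filter.mp hi).1)).resolve_left (mem_filter.mp hi).2.ne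
    have hu' : ∀ θ' ∈ T, ∑ i ∈ {i ∈ s | c i < θ} with c i ≤ θ', u i ≤ 0 := fun θ' hθ' => by
      rw [filter_filter_lt_le_of_lt c s (hθ θ' hθ')]; exact hu θ' (mem_insert_of_mem hθ')
    have hlow := sum_sub_mul_nonneg c u T _ θ hs' hθ hu'
    have htop : ∑ i ∈ s, u i ≤ 0 := by
      simpa [filter_true_of_mem hle] using hu θ (mem_insert_self θ T)
    have hgap := ht θ (mem_insert_self θ T)
    rw [sum_sub_mul_eq_of_le c u s t hle] at hsum
    have htop_eq : ∑ i ∈ s, u i = 0 := by nlinarith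
    have hlow_eq : ∑ i ∈ s with c i < θ, (c i - θ) * u i ≤ 0 := by nlinarith
    intro θ' hθ'
    rcases mem_insert.mp hθ' with rfl | hθ'
    · rwa [filter_true_of_mem hle]
    · rw [← filter_filter_lt_le_of_lt c s (hθ θ' hθ')]
      exact ih _ θ hs' hθ hu' hlow_eq θ' hθ'

end LayerCake

lemma sum_sub_mul_sub {V : Type*} (s : Finset V) (c z x : V → ℝ) (t : ℝ) :
    ∑ i ∈ s, (c i - t) * (z i - x i) =
      (∑ i ∈ s, c i * z i - ∑ i ∈ s, c i * x i) - t * (∑ i ∈ s, z i - ∑ i ∈ s, x i) := by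
  simp only [sub_mul, mul_sub, sum_sub_distrib, mul_sum]
  ring

section LinearOptimization

variable {V : Type*} [Fintype V] [DecidableEq V] {F : Finset V → ℝ}

theorem forall_sum_mul_le_iff_sublevel_tight (hsub : Submodular F) (hF0 : F ∅ = 0)
    (c : V → ℝ) {x : V → ℝ} (hx : x ∈ basePolytope F) :
    (∀ z ∈ basePolytope F, ∑ i, c i * x i ≤ ∑ i, c i * z i) ↔
      ∀ j, ∑ i ∈ {i | c i ≤ c j}, x i = F {i | c i ≤ c j} := by
  obtain ⟨M, hM⟩ := Finite.exists_le c
  have hc : ∀ i ∈ univ, c i ∈ univ.image c := fun i _ => mem_image_of_mem c (mem_univ i)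
  have ht : ∀ θ ∈ univ.image c, θ < M + 1 := fun θ hθ => by
    obtain ⟨i, -, rfl⟩ := mem_image.mp hθ
    linarith [hM i]
  constructor
  · intro hmin j
    obtain ⟨g, hg, hg_tight⟩ := exists_mem_basePolytope_sublevel_tight hsub hF0 c
    have hsum : ∑ i, (c i - (M + 1)) * (x i - g i) ≤ 0 := by
      rw [sum_sub_mul_sub, hx.2, hg.2]
      linarith [hmin g hg]
    have hzero := sum_sublevel_eq_zero c (x - g) _ univ _ hc ht
      (fun θ _ => by simpa [sum_sub_distrib, hg_tight θ] using hx.1 _) hsum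
      (c j) (hc j (mem_univ j))
    simpa [sum_sub_distrib, hg_tight, sub_eq_zero] using hzero
  · intro htight z hz
    have hnonneg := sum_sub_mul_nonneg c (z - x) _ univ _ hc ht fun θ hθ => by
      obtain ⟨j, -, rfl⟩ := mem_image.mp hθ
      simpa [sum_sub_distrib, htight j] using hz.1 _
    rw [Pi.sub_def, sum_sub_mul_sub, hx.2, hz.2] at hnonneg
    linarith

theorem forall_sum_mul_le_iff_of_le_iff (hsub : Submodular F) (hF0 : F ∅ = 0)
    {c d : V → ℝ} (hcd : ∀ i j, c i ≤ c j ↔ d i ≤ d j) {x : V → ℝ} (hx : x ∈ basePolytope F) :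
    (∀ z ∈ basePolytope F, ∑ i, c i * x i ≤ ∑ i, c i * z i) ↔
      ∀ z ∈ basePolytope F, ∑ i, d i * x i ≤ ∑ i, d i * z i := by
  simp only [forall_sum_mul_le_iff_sublevel_tight hsub hF0 _ hx, hcd]

end LinearOptimization

lemma basePolytope_convex {V : Type*} [Fintype V] [DecidableEq V] (F : Finset V → ℝ) :
    Convex ℝ (basePolytope F) := by
  intro a ha b hb s t hs ht hst
  have hsum : ∀ A : Finset V, ∑ i ∈ A, (s • a + t • b) i = s * ∑ i ∈ A, a i + t * ∑ i ∈ A, b i :=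
    fun A => by simp only [Pi.add_apply, Pi.smul_apply, smul_eq_mul, sum_add_distrib, mul_sum]
  refine ⟨fun A => ?_, ?_⟩
  · rw [hsum, ← one_mul (F A), ← hst, add_mul]
    exact add_le_add (mul_le_mul_of_nonneg_left (ha.1 A) hs) (mul_le_mul_of_nonneg_left (hb.1 A) ht)
  · rw [hsum, ha.2, hb.2, ← add_mul, hst, one_mul]

theorem forall_sum_le_iff_forall_sum_mul_le {ι : Type*} [Fintype ι] {C : Set (ι → ℝ)}
    (hC : Convex ℝ C) {x : ι → ℝ} (hx : x ∈ C) {φ : ι → ℝ → ℝ} {g : ι → ℝ}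
    (hderiv : ∀ i, HasDerivAt (φ i) (g i) (x i))
    (htangent : ∀ i s, φ i (x i) + g i * (s - x i) ≤ φ i s) :
    (∀ z ∈ C, ∑ i, φ i (x i) ≤ ∑ i, φ i (z i)) ↔ ∀ z ∈ C, ∑ i, g i * x i ≤ ∑ i, g i * z i := by
  refine ⟨fun hmin z hz => ?_, fun hlin z hz => ?_⟩
  · have hfderiv : HasFDerivAt (fun z : ι → ℝ => ∑ i, φ i (z i))
        (∑ i, (ContinuousLinearMap.smulRight (1 : ℝ →L[ℝ] ℝ) (g i)).comp
          (ContinuousLinearMap.proj i)) x :=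
      HasFDerivAt.fun_sum fun i _ => (hderiv i).hasFDerivAt.comp x (hasFDerivAt_apply i x)
    have hnonneg := (isMinOn_iff.mpr hmin).localize.hasFDerivWithinAt_nonneg
      hfderiv.hasFDerivWithinAt
      (sub_mem_posTangentConeAt_of_segment_subset (hC.segment_subset hx hz))
    simp only [FunLike.coe_sum, Finset.sum_apply, ContinuousLinearMap.coe_comp,
      Function.comp_apply, ContinuousLinearMap.proj_apply, Pi.sub_apply,
      ContinuousLinearMap.smulRight_apply, one_apply_eq_self, smul_eq_mul] at hnonneg
    have hsplit : ∑ i, (z i - x i) * g i = ∑ i, g i * z i - ∑ i, g i * x i := by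
      rw [← sum_sub_distrib]; exact sum_congr rfl fun _ _ => by ring
    linarith
  · have htangents := sum_le_sum fun i (_ : i ∈ univ) => htangent i (z i)
    have hsplit : ∑ i, (φ i (x i) + g i * (z i - x i)) =
        ∑ i, φ i (x i) + (∑ i, g i * z i - ∑ i, g i * x i) := by
      rw [sum_add_distrib, ← sum_sub_distrib]; simp only [mul_sub]
    linarith [hlin z hz]

lemma exp_div_exp_add_exp (u v : ℝ) : exp u / (exp u + exp v) = sigmoid (u - v) := by
  rw [sigmoid_def, neg_sub, exp_sub]
  field_simp

lemma log_exp_add_exp_tangent (u v δ : ℝ) :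
    log (exp u + exp v) + sigmoid (u - v) * δ ≤ log (exp (u + δ) + exp v) := by
  have hE : 0 < exp u + exp v := by positivity
  set p := sigmoid (u - v) with hp_def
  have hp : exp u = p * (exp u + exp v) := by
    rw [hp_def, ← exp_div_exp_add_exp, div_mul_cancel₀ _ hE.ne']
  have hfactor : exp (u + δ) + exp v = (exp u + exp v) * (p * exp δ + (1 - p)) := by
    rw [exp_add]; linear_combination (exp δ - 1) * hp
  have hjensen : exp (p * δ) ≤ p * exp δ + (1 - p) := by
    simpa using convexOn_exp.2 (Set.mem_univ δ) (Set.mem_univ 0) (sigmoid_nonneg _)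
      (sub_nonneg.mpr (sigmoid_le_one _)) (add_sub_cancel p 1)
  rw [hfactor, log_mul hE.ne' (exp_pos _ |>.trans_le hjensen).ne', add_le_add_iff_left,
    ← log_exp (p * δ)]
  exact log_le_log (exp_pos _) hjensen

lemma hasDerivAt_mul_sub_sq (a b x : ℝ) :
    HasDerivAt (fun s => a * (s - b) ^ 2) (2 * a * (x - b)) x := by
  refine ((((hasDerivAt_id x).sub_const b).pow 2).const_mul a).congr_deriv ?_
  simp only [id, Nat.cast_ofNat]
  ring

lemma mul_sub_sq_tangent {a : ℝ} (ha : 0 ≤ a) (b x s : ℝ) :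
    a * (x - b) ^ 2 + 2 * a * (x - b) * (s - x) ≤ a * (s - b) ^ 2 := by
  nlinarith [mul_nonneg ha (sq_nonneg (s - x))]

lemma hasDerivAt_one_div_mul_log_exp_add_exp {w : ℝ} (hw : w ≠ 0) (y x : ℝ) :
    HasDerivAt (fun s => 1 / w * log (exp (-(w * s)) + exp (-(w * y))))
      (sigmoid (w * (x - y)) - 1) x := by
  have hlin : HasDerivAt (fun s => -(w * s)) (-w) x := by
    simpa using (hasDerivAt_id x).const_mul (-w)
  refine (((hlin.exp.add_const (exp (-(w * y)))).log (by positivity)).const_mul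
    (1 / w)).congr_deriv ?_
  have hsigmoid := exp_div_exp_add_exp (-(w * x)) (-(w * y))
  rw [show -(w * x) - -(w * y) = -(w * (x - y)) by ring, sigmoid_neg] at hsigmoid
  rw [show sigmoid (w * (x - y)) - 1 = -(1 - sigmoid (w * (x - y))) by ring, ← hsigmoid]
  field_simp

lemma one_div_mul_log_exp_add_exp_tangent {w : ℝ} (hw : 0 < w) (y x s : ℝ) :
    1 / w * log (exp (-(w * x)) + exp (-(w * y))) + (sigmoid (w * (x - y)) - 1) * (s - x) ≤
      1 / w * log (exp (-(w * s)) + exp (-(w * y))) := by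
  have h := log_exp_add_exp_tangent (-(w * x)) (-(w * y)) (-(w * (s - x)))
  rw [show -(w * x) - -(w * y) = -(w * (x - y)) by ring, sigmoid_neg,
    show -(w * x) + -(w * (s - x)) = -(w * s) by ring] at h
  have hscaled := mul_le_mul_of_nonneg_left h (one_div_pos.mpr hw).le
  field_simp at hscaled ⊢
  linarith

/-- For positive weights `wᵢ > 0` and any `y`, the convex programs
minimizing `∑ wᵢ(xᵢ-yᵢ)²` and `∑ (1/wᵢ) log(exp(-wᵢxᵢ)+exp(-wᵢyᵢ))` over the
base polytope `B(F)` have the same optimal solution. -/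
theorem stmt_3 {V : Type*} [Fintype V] [DecidableEq V]
    (F : Finset V → ℝ) (hsub : Submodular F) (hF0 : F ∅ = 0)
    (w y : V → ℝ) (hw : ∀ i, 0 < w i) (x : V → ℝ) (hx : x ∈ basePolytope F) :
    ((∀ z ∈ basePolytope F,
        ∑ i : V, w i * (x i - y i) ^ 2 ≤ ∑ i : V, w i * (z i - y i) ^ 2) ↔
     (∀ z ∈ basePolytope F,
        ∑ i : V, (1 / w i) *
          Real.log (Real.exp (-(w i * x i)) + Real.exp (-(w i * y i)))
        ≤ ∑ i : V, (1 / w i) *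
          Real.log (Real.exp (-(w i * z i)) + Real.exp (-(w i * y i))))) := by
  have hconv := basePolytope_convex F
  have hquadratic := forall_sum_le_iff_forall_sum_mul_le hconv hx
    (φ := fun i s => w i * (s - y i) ^ 2)
    (fun i => hasDerivAt_mul_sub_sq (w i) (y i) (x i))
    (fun i => mul_sub_sq_tangent (hw i).le (y i) (x i))
  have hlog := forall_sum_le_iff_forall_sum_mul_le hconv hx
    (φ := fun i s => 1 / w i * log (exp (-(w i * s)) + exp (-(w i * y i))))
    (fun i => hasDerivAt_one_div_mul_log_exp_add_exp (hw i).ne' (y i) (x i))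
    (fun i => one_div_mul_log_exp_add_exp_tangent (hw i) (y i) (x i))
  have hsame_order : ∀ i j, 2 * w i * (x i - y i) ≤ 2 * w j * (x j - y j) ↔
      sigmoid (w i * (x i - y i)) - 1 ≤ sigmoid (w j * (x j - y j)) - 1 := fun i j => by
    rw [sub_le_sub_iff_right, sigmoid_le_iff]
    constructor <;> intro h <;> linarith
  exact hquadratic.trans ((forall_sum_mul_le_iff_of_le_iff hsub hF0 hsame_order hx).trans hlog.symm)
end

section
/- Let F : 2^V → ℝ be submodular with F(∅)=0. The minimizer of ∑_{i∈V} log(1 + exp(−s_i)) over s ∈ B(F) coincides with the minimizer of ∑_{i∈V} s_i^2 over s ∈ B(F) (the minimum norm point of the base polytope). -/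
open Finset

namespace Submodular

variable {V : Type*} [DecidableEq V] {F : Finset V → ℝ}

theorem add_le_of_subset_of_disjoint (hF : Submodular F) (C : Finset V) {A B : Finset V}
    (hAB : A ⊆ B) (hCB : Disjoint C B) : F (B ∪ C) + F A ≤ F (A ∪ C) + F B := by
  induction C using Finset.induction_on with
  | empty => simp [add_comm]
  | @insert x C hxC ih =>
    rw [disjoint_insert_left] at hCB
    have hgain := hF (A ∪ C) (B ∪ C) (union_subset_union hAB subset_rfl) x
      (by simp [hCB.1, hxC])
    rw [union_insert, union_insert]
    linarith [ih hCB.2]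

theorem union_add_inter_le (hF : Submodular F) (A B : Finset V) :
    F (A ∪ B) + F (A ∩ B) ≤ F A + F B := by
  have h := hF.add_le_of_subset_of_disjoint (A \ B) (A := A ∩ B) inter_subset_right
    sdiff_disjoint
  rwa [union_sdiff_self_eq_union, union_comm,
    show A ∩ B ∪ A \ B = A from sup_inf_sdiff A B] at h

end Submodular

section LevelSets

variable {V : Type*} [Fintype V]

theorem sum_mul_nonneg_of_sum_levelSet_nonpos {w d : V → ℝ} (hd : ∑ i, d i = 0)
    (hlevel : ∀ j, ∑ i ∈ univ.filter (fun i => w i ≤ w j), d i ≤ 0) :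
    0 ≤ ∑ i, w i * d i := by
  suffices ∀ (S : Finset ℝ) (w : V → ℝ), (∀ i, w i ∈ S) →
      (∀ v ∈ S, ∑ i ∈ univ.filter (fun i => w i ≤ v), d i ≤ 0) → 0 ≤ ∑ i, w i * d i from
    this (univ.image w) w (fun i => mem_image_of_mem w (mem_univ i)) (by simpa using hlevel)
  intro S
  induction S using Finset.induction_on_min with
  | empty => exact fun w hw _ => (sum_eq_zero fun i _ => (notMem_empty _ (hw i)).elim).ge
  | insert a S ha ih =>
    intro w hw hlevel
    rcases S.eq_empty_or_nonempty with rfl | hS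
    · have hwa i : w i = a := by simpa using hw i
      simp [hwa, ← mul_sum, hd]
    -- Raise the lowest level `a` of `w` to the next one `m`: this removes one value and can
    -- only decrease the sum, since `a < m` and the `d`-sum over the level set `{w ≤ a}` is `≤ 0`.
    set m := S.min' hS
    have ham : a < m := ha m (S.min'_mem hS)
    let w' i := max (w i) m
    have hw_of_ne i (hi : w i ≠ a) : m ≤ w i :=
      S.min'_le _ ((mem_insert.1 (hw i)).resolve_left hi)
    have hw' i : w' i ∈ S := by
      by_cases hi : w i = a
      · simpa [w', hi, ham.le] using S.min'_mem hS
      · simpa [w', hw_of_ne i hi] using (mem_insert.1 (hw i)).resolve_left hi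
    have hlevel' v (hv : v ∈ S) : univ.filter (fun i => w' i ≤ v) = univ.filter (w · ≤ v) := by
      have hmv : m ≤ v := S.min'_le v hv
      ext i
      simp [w', hmv]
    have hdecomp : ∑ i, w i * d i
        = ∑ i, w' i * d i + ∑ i ∈ univ.filter (w · ≤ a), (a - m) * d i := by
      rw [sum_filter, ← sum_add_distrib]
      refine sum_congr rfl fun i _ => ?_
      by_cases hi : w i = a
      · simp [w', hi, ham.le]
        ring
      · have hmw := hw_of_ne i hi
        simp [w', hmw, not_le.2 (ham.trans_le hmw)]
    have hIH := ih w' hw' fun v hv => hlevel' v hv ▸ hlevel v (mem_insert_of_mem hv)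
    have hA := hlevel a (mem_insert_self a S)
    rw [hdecomp, ← mul_sum]
    linarith [mul_nonneg_of_nonpos_of_nonpos (sub_nonpos.2 ham.le) hA]

end LevelSets

def IsTight {V : Type*} (F : Finset V → ℝ) (s : V → ℝ) (A : Finset V) : Prop :=
  ∑ i ∈ A, s i = F A

section BasePolytope

variable {V : Type*} [Fintype V] [DecidableEq V] {F : Finset V → ℝ} {s : V → ℝ}

theorem IsTight.union_inter (hF : Submodular F) (hs : s ∈ basePolytope F) {A B : Finset V}
    (hA : IsTight F s A) (hB : IsTight F s B) : IsTight F s (A ∪ B) ∧ IsTight F s (A ∩ B) := by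
  have hmod := hF.union_add_inter_le A B
  have hsum := sum_union_inter (s₁ := A) (s₂ := B) (f := s)
  unfold IsTight at hA hB ⊢
  constructor <;> linarith [hs.1 (A ∪ B), hs.1 (A ∩ B)]

theorem exists_exchange_of_not_isTight (hF : Submodular F) (hF0 : F ∅ = 0)
    (hs : s ∈ basePolytope F) {A : Finset V} (hA : ¬IsTight F s A) :
    ∃ i ∈ A, ∃ j ∉ A, ∀ B, i ∈ B → j ∉ B → ¬IsTight F s B := by
  classical
  -- `D i` is the smallest tight set containing `i`.
  let T i := univ.filter fun B => IsTight F s B ∧ i ∈ B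
  have hT i : (T i).Nonempty := ⟨univ, mem_filter.2 ⟨mem_univ _, hs.2, mem_univ i⟩⟩
  let D i := (T i).inf' (hT i) id
  have hD_tight i : IsTight F s (D i) :=
    inf'_induction _ _ (fun _ h₁ _ h₂ => (h₁.union_inter hF hs h₂).2)
      fun B hB => (mem_filter.1 hB).2.1
  have hD_mem i : i ∈ D i := (mem_inf' _).2 fun B hB => (mem_filter.1 hB).2.2
  obtain ⟨i, hiA, hDA⟩ : ∃ i ∈ A, ¬D i ⊆ A := by
    by_contra! h
    have hA_eq : A.sup D = A :=
      (Finset.sup_le h).antisymm fun i hi => le_sup (f := D) hi (hD_mem i)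
    exact hA (hA_eq ▸ sup_induction (by simp [IsTight, hF0])
      (fun _ h₁ _ h₂ => (h₁.union_inter hF hs h₂).1) fun i _ => hD_tight i)
  obtain ⟨j, hjD, hjA⟩ := not_subset.1 hDA
  exact ⟨i, hiA, j, hjA, fun B hiB hjB hB =>
    hjB (inf'_le id (mem_filter.2 ⟨mem_univ B, hB, hiB⟩) hjD)⟩

theorem exists_pos_add_single_sub_single_mem (hs : s ∈ basePolytope F) {i j : V}
    (hij : i ≠ j) (hslack : ∀ B, i ∈ B → j ∉ B → ¬IsTight F s B) :
    ∃ ε > 0, ∀ δ, 0 ≤ δ → δ ≤ ε → s + Pi.single i δ - Pi.single j δ ∈ basePolytope F := by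
  have hne : (univ.filter fun B : Finset V => i ∈ B ∧ j ∉ B).Nonempty :=
    ⟨{i}, by simp [hij.symm]⟩
  obtain ⟨B₀, hB₀, hmin⟩ := exists_min_image _ (fun B => F B - ∑ k ∈ B, s k) hne
  obtain ⟨-, hiB₀, hjB₀⟩ := mem_filter.1 hB₀
  refine ⟨F B₀ - ∑ k ∈ B₀, s k,
    sub_pos.2 ((hs.1 B₀).lt_of_ne (hslack B₀ hiB₀ hjB₀)), fun δ hδ hδε => ?_⟩
  have hsum B : ∑ k ∈ B, (s + Pi.single i δ - Pi.single j δ : V → ℝ) k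
      = ∑ k ∈ B, s k + (if i ∈ B then δ else 0) - (if j ∈ B then δ else 0) := by
    simp only [Pi.add_apply, Pi.sub_apply, sum_sub_distrib, sum_add_distrib, sum_pi_single']
  refine ⟨fun B => ?_, by rw [hsum]; simp [hs.2]⟩
  have hB := hs.1 B
  rw [hsum]
  by_cases hiB : i ∈ B <;> by_cases hjB : j ∈ B <;> simp only [hiB, hjB, if_true, if_false]
  · linarith
  · linarith [hmin B (mem_filter.2 ⟨mem_univ B, hiB, hjB⟩)]
  all_goals linarith

end BasePolytope

section Convex

variable {g φ : ℝ → ℝ}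

theorem add_mul_sub_le_of_hasDerivAt (hg : ∀ x, HasDerivAt g (φ x) x) (hφ : Monotone φ)
    (x y : ℝ) : g x + φ x * (y - x) ≤ g y := by
  have hmvt {a b : ℝ} (hab : a < b) : ∃ c ∈ Set.Ioo a b, g b - g a = φ c * (b - a) := by
    obtain ⟨c, hc, hslope⟩ := exists_hasDerivAt_eq_slope g φ hab
      (fun t _ => (hg t).continuousAt.continuousWithinAt) fun t _ => hg t
    exact ⟨c, hc, by rw [hslope, div_mul_cancel₀ _ (sub_ne_zero.2 hab.ne')]⟩
  rcases lt_trichotomy x y with hxy | rfl | hyx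
  · obtain ⟨c, hc, hgc⟩ := hmvt hxy
    nlinarith [hφ hc.1.le]
  · simp
  · obtain ⟨c, hc, hgc⟩ := hmvt hyx
    nlinarith [hφ hc.2.le]

theorem add_lt_add_of_hasDerivAt (hg : ∀ x, HasDerivAt g (φ x) x) (hφ : StrictMono φ)
    {a b δ : ℝ} (hδ : 0 < δ) (hab : a + δ < b - δ) :
    g (a + δ) + g (b - δ) < g a + g b := by
  have ha := add_mul_sub_le_of_hasDerivAt hg hφ.monotone (a + δ) a
  have hb := add_mul_sub_le_of_hasDerivAt hg hφ.monotone (b - δ) b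
  have hφab := mul_lt_mul_of_pos_left (hφ hab) hδ
  linarith

end Convex

section Minimisers

variable {V : Type*} [Fintype V] [DecidableEq V] {F : Finset V → ℝ} {s : V → ℝ}
  {g φ : ℝ → ℝ}

theorem isTight_levelSet_of_forall_sum_le (hF : Submodular F) (hF0 : F ∅ = 0)
    (hg : ∀ x, HasDerivAt g (φ x) x) (hφ : StrictMono φ) (hs : s ∈ basePolytope F)
    (hmin : ∀ z ∈ basePolytope F, ∑ i, g (s i) ≤ ∑ i, g (z i)) (j : V) :
    IsTight F s (univ.filter fun i => s i ≤ s j) := by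
  by_contra hA
  obtain ⟨i, hiA, k, hkA, hslack⟩ := exists_exchange_of_not_isTight hF hF0 hs hA
  simp only [mem_filter, mem_univ, true_and, not_le] at hiA hkA
  have hik : s i < s k := hiA.trans_lt hkA
  have hik_ne : i ≠ k := fun h => hik.ne (congrArg s h)
  obtain ⟨ε, hε, hmem⟩ := exists_pos_add_single_sub_single_mem hs hik_ne hslack
  set δ := min ε ((s k - s i) / 4)
  have hδ : 0 < δ := lt_min hε (by linarith)
  have hδik : s i + δ < s k - δ := by linarith [min_le_right ε ((s k - s i) / 4)]
  let z := s + Pi.single i δ - Pi.single k δ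
  have hdiff : ∑ l, g (z l) - ∑ l, g (s l) = g (s i + δ) + g (s k - δ) - (g (s i) + g (s k)) := by
    rw [← sum_sub_distrib, Fintype.sum_eq_add i k hik_ne fun l hl => by simp [z, hl.1, hl.2]]
    simp [z, hik_ne, hik_ne.symm]
    ring
  have hle := hmin z (hmem δ hδ.le (min_le_left _ _))
  have hlt := add_lt_add_of_hasDerivAt hg hφ hδ hδik
  linarith

theorem sum_mul_le_of_isTight_levelSet {w z : V → ℝ} (hs : s ∈ basePolytope F)
    (hw : ∀ j, IsTight F s (univ.filter fun i => w i ≤ w j)) (hz : z ∈ basePolytope F) :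
    ∑ i, w i * s i ≤ ∑ i, w i * z i := by
  have hnonneg := sum_mul_nonneg_of_sum_levelSet_nonpos (w := w) (d := z - s)
    (by simp [sum_sub_distrib, hz.2, hs.2])
    fun j => by
      have htight : ∑ i ∈ univ.filter (fun i => w i ≤ w j), s i = F _ := hw j
      simp only [Pi.sub_apply, sum_sub_distrib]
      linarith [hz.1 (univ.filter fun i => w i ≤ w j)]
  simpa [mul_sub, sum_sub_distrib] using hnonneg

theorem sum_le_of_isTight_levelSet (hg : ∀ x, HasDerivAt g (φ x) x) (hφ : StrictMono φ)
    (hs : s ∈ basePolytope F) (htight : ∀ j, IsTight F s (univ.filter fun i => s i ≤ s j))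
    {z : V → ℝ} (hz : z ∈ basePolytope F) : ∑ i, g (s i) ≤ ∑ i, g (z i) := by
  have hlin : ∑ i, φ (s i) * s i ≤ ∑ i, φ (s i) * z i :=
    sum_mul_le_of_isTight_levelSet hs (fun j => by simpa only [hφ.le_iff_le] using htight j) hz
  calc ∑ i, g (s i) ≤ ∑ i, g (s i) + (∑ i, φ (s i) * z i - ∑ i, φ (s i) * s i) := by linarith
    _ = ∑ i, (g (s i) + φ (s i) * (z i - s i)) := by
      simp only [sum_add_distrib, mul_sub, sum_sub_distrib]
    _ ≤ ∑ i, g (z i) :=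
      sum_le_sum fun i _ => add_mul_sub_le_of_hasDerivAt hg hφ.monotone (s i) (z i)

theorem forall_sum_le_iff_isTight_levelSet (hF : Submodular F) (hF0 : F ∅ = 0)
    (hg : ∀ x, HasDerivAt g (φ x) x) (hφ : StrictMono φ) (hs : s ∈ basePolytope F) :
    (∀ z ∈ basePolytope F, ∑ i, g (s i) ≤ ∑ i, g (z i)) ↔
      ∀ j, IsTight F s (univ.filter fun i => s i ≤ s j) :=
  ⟨isTight_levelSet_of_forall_sum_le hF hF0 hg hφ hs, fun h _ hz =>
    sum_le_of_isTight_levelSet hg hφ hs h hz⟩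

end Minimisers

theorem hasDerivAt_log_one_add_exp_neg (x : ℝ) :
    HasDerivAt (fun x => Real.log (1 + Real.exp (-x))) (-(1 + Real.exp x)⁻¹) x := by
  have h := (((hasDerivAt_neg x).exp).const_add 1).log (by positivity)
  convert h using 1
  rw [Real.exp_neg]
  field_simp
  ring

theorem strictMono_neg_inv_one_add_exp : StrictMono fun x : ℝ => -(1 + Real.exp x)⁻¹ :=
  fun _ _ hab => neg_lt_neg <| inv_strictAnti₀ (by positivity) (by simpa using hab)

/-- The minimizer of `∑ log(1+exp(-sᵢ))` over `B(F)` coincides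
with the minimizer of `∑ sᵢ²` over `B(F)` (the minimum norm point). -/
theorem stmt_4 {V : Type*} [Fintype V] [DecidableEq V]
    (F : Finset V → ℝ) (hsub : Submodular F) (hF0 : F ∅ = 0)
    (s : V → ℝ) (hs : s ∈ basePolytope F) :
    ((∀ z ∈ basePolytope F,
        ∑ i : V, Real.log (1 + Real.exp (-(s i)))
          ≤ ∑ i : V, Real.log (1 + Real.exp (-(z i)))) ↔
     (∀ z ∈ basePolytope F, ∑ i : V, (s i) ^ 2 ≤ ∑ i : V, (z i) ^ 2)) :=
  (forall_sum_le_iff_isTight_levelSet hsub hF0 hasDerivAt_log_one_add_exp_neg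
      strictMono_neg_inv_one_add_exp hs).trans
    (forall_sum_le_iff_isTight_levelSet hsub hF0 (fun x => by simpa using hasDerivAt_pow 2 x)
      (strictMono_mul_left_of_pos two_pos) hs).symm
end

section
/- Let F : 2^V → ℝ be submodular with F(∅)=0 and let s* be the minimum norm point of B(F), i.e., the unique minimizer of ‖s‖² over s ∈ B(F). Then A₋ = { v : s*_v < 0 } and A₀ = { v : s*_v ≤ 0 } are respectively the unique minimal and maximal minimizers of F, i.e., F(A₋) = F(A₀) = min_{A⊆V} F(A), and every minimizer A of F satisfies A₋ ⊆ A ⊆ A₀. -/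
set_option linter.unusedSectionVars false

namespace Stmt5Aux

open Finset

variable {V : Type*} [Fintype V] [DecidableEq V] {F : Finset V → ℝ} {s : V → ℝ}

lemma submod_strong {V : Type*} [DecidableEq V] {F : Finset V → ℝ}
    (hsub : Submodular F) (S : Finset V) :
    ∀ {A B : Finset V}, A ⊆ B → Disjoint S B → F (B ∪ S) - F B ≤ F (A ∪ S) - F A := by
  induction S using Finset.induction_on with
  | empty => intro A B _ _; simp
  | @insert x S hx ih =>
    intro A B hAB hdisj
    have hxB : x ∉ B := Finset.disjoint_left.mp hdisj (Finset.mem_insert_self x S)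
    have hSB : Disjoint S B := (Finset.disjoint_insert_left.mp hdisj).2
    have hxBS : x ∉ B ∪ S := by simp [hxB, hx]
    have hsubset : A ∪ S ⊆ B ∪ S := Finset.union_subset_union hAB (subset_refl S)
    have h1 := hsub (A ∪ S) (B ∪ S) hsubset x hxBS
    have h2 := ih hAB hSB
    have e1 : B ∪ insert x S = insert x (B ∪ S) := Finset.union_insert x B S
    have e2 : A ∪ insert x S = insert x (A ∪ S) := Finset.union_insert x A S
    rw [e1, e2]; linarith

lemma submod_lattice {V : Type*} [DecidableEq V] {F : Finset V → ℝ}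
    (hsub : Submodular F) (A B : Finset V) :
    F (A ∪ B) + F (A ∩ B) ≤ F A + F B := by
  have h := submod_strong hsub (A \ B) (A := A ∩ B) (B := B)
    Finset.inter_subset_right Finset.sdiff_disjoint
  have e1 : B ∪ A \ B = A ∪ B := by
    rw [Finset.union_sdiff_self_eq_union, Finset.union_comm]
  have e2 : A ∩ B ∪ A \ B = A := by ext y; simp; tauto
  rw [e1, e2] at h
  linarith

lemma tight_union_inter (hsub : Submodular F) (hle : ∀ A : Finset V, ∑ i ∈ A, s i ≤ F A)
    {A B : Finset V} (hA : ∑ i ∈ A, s i = F A) (hB : ∑ i ∈ B, s i = F B) :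
    (∑ i ∈ A ∪ B, s i = F (A ∪ B)) ∧ (∑ i ∈ A ∩ B, s i = F (A ∩ B)) := by
  have h1 := hle (A ∪ B)
  have h2 := hle (A ∩ B)
  have h3 := submod_lattice hsub A B
  have h4 : ∑ i ∈ A ∪ B, s i + ∑ i ∈ A ∩ B, s i = ∑ i ∈ A, s i + ∑ i ∈ B, s i :=
    Finset.sum_union_inter
  constructor <;> linarith

lemma perturb (hs : s ∈ basePolytope F)
    (hmin : ∀ z ∈ basePolytope F, ∑ i : V, (s i) ^ 2 ≤ ∑ i : V, (z i) ^ 2)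
    {u v : V} (huv : u ≠ v)
    (h : ∀ A : Finset V, v ∈ A → u ∉ A → ∑ i ∈ A, s i < F A) : s u ≤ s v := by
  classical
  by_contra hlt
  push_neg at hlt
  set 𝒜 : Finset (Finset V) := univ.filter (fun A => v ∈ A ∧ u ∉ A) with h𝒜
  have hne : 𝒜.Nonempty := ⟨{v}, by simp [h𝒜, huv]⟩
  set δ : ℝ := 𝒜.inf' hne (fun A => F A - ∑ i ∈ A, s i) with hδ
  have hδpos : 0 < δ := by
    rw [hδ, Finset.lt_inf'_iff]
    intro A hA
    rw [h𝒜, Finset.mem_filter] at hA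
    have := h A hA.2.1 hA.2.2
    linarith
  set ε : ℝ := min δ ((s u - s v) / 2) with hε
  have hεpos : 0 < ε := lt_min hδpos (by linarith)
  set z : V → ℝ := fun i => s i + (if i = v then ε else 0) - (if i = u then ε else 0) with hz
  have hsum : ∀ A : Finset V, ∑ i ∈ A, z i =
      ∑ i ∈ A, s i + (if v ∈ A then ε else 0) - (if u ∈ A then ε else 0) := by
    intro A
    simp only [hz, Finset.sum_sub_distrib, Finset.sum_add_distrib, Finset.sum_ite_eq' A]
  have hzB : z ∈ basePolytope F := by
    constructor
    · intro A
      rw [hsum A]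
      by_cases hu : u ∈ A
      · by_cases hv : v ∈ A <;> simp [hu, hv] <;> [exact hs.1 A; nlinarith [hs.1 A]]
      · by_cases hv : v ∈ A
        · have hAmem : A ∈ 𝒜 := by simp [h𝒜, hv, hu]
          have hδle : δ ≤ F A - ∑ i ∈ A, s i := Finset.inf'_le _ hAmem
          have : ε ≤ δ := min_le_left _ _
          simp only [hv, hu, if_true, if_false]
          linarith
        · simp [hu, hv]; exact hs.1 A
    · have := hsum (univ : Finset V)
      simp only [Finset.mem_univ, if_true] at this
      rw [this, hs.2]; ring
  have hnorm := hmin z hzB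
  have hdiff : ∑ i : V, (z i) ^ 2 = ∑ i : V, (s i) ^ 2 + (2 * ε * (s v - s u) + 2 * ε ^ 2) := by
    have hsplit : ∑ i : V, ((z i) ^ 2 - (s i) ^ 2) = 2 * ε * (s v - s u) + 2 * ε ^ 2 := by
      have hzero : ∀ i ∈ (univ : Finset V), i ∉ ({u, v} : Finset V) →
          (z i) ^ 2 - (s i) ^ 2 = 0 := by
        intro i _ hi
        simp only [Finset.mem_insert, Finset.mem_singleton] at hi
        push_neg at hi
        simp [hz, hi.1, hi.2]
      rw [← Finset.sum_subset (Finset.subset_univ ({u, v} : Finset V)) hzero]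
      rw [Finset.sum_pair huv]
      simp only [hz, if_pos rfl, if_neg huv, if_neg (Ne.symm huv), if_true]
      ring
    rw [Finset.sum_sub_distrib] at hsplit
    linarith
  rw [hdiff] at hnorm
  have h1 : 0 ≤ 2 * ε * (s v - s u) + 2 * ε ^ 2 := by linarith
  have h2 : ε ≤ (s u - s v) / 2 := min_le_right _ _
  nlinarith

lemma exists_min_tight (hsub : Submodular F) (hs : s ∈ basePolytope F)
    (hmin : ∀ z ∈ basePolytope F, ∑ i : V, (s i) ^ 2 ≤ ∑ i : V, (z i) ^ 2) (v : V) :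
    ∃ T : Finset V, (∑ i ∈ T, s i = F T) ∧ v ∈ T ∧ ∀ u ∈ T, s u ≤ s v := by
  classical
  set 𝒯 : Finset (Finset V) :=
    univ.filter (fun A => (∑ i ∈ A, s i = F A) ∧ v ∈ A) with h𝒯
  have hne : 𝒯.Nonempty := ⟨univ, by simp [h𝒯, hs.2]⟩
  obtain ⟨T, hT, hTmin⟩ := Finset.exists_min_image 𝒯 Finset.card hne
  rw [h𝒯, Finset.mem_filter] at hT
  obtain ⟨-, hTt, hTv⟩ := hT
  have hsubA : ∀ A : Finset V, (∑ i ∈ A, s i = F A) → v ∈ A → T ⊆ A := by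
    intro A htA hvA
    have hint := (tight_union_inter hsub hs.1 hTt htA).2
    have hmem : T ∩ A ∈ 𝒯 := by
      rw [h𝒯, Finset.mem_filter]
      exact ⟨Finset.mem_univ _, hint, Finset.mem_inter.mpr ⟨hTv, hvA⟩⟩
    have hcard := hTmin _ hmem
    have heq : T ∩ A = T :=
      Finset.eq_of_subset_of_card_le Finset.inter_subset_left hcard
    intro x hx
    rw [← heq] at hx
    exact (Finset.mem_inter.mp hx).2
  refine ⟨T, hTt, hTv, ?_⟩
  intro u hu
  by_cases huv : u = v
  · subst huv; exact le_refl _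
  · apply perturb hs hmin huv
    intro A hvA huA
    rcases lt_or_eq_of_le (hs.1 A) with h | h
    · exact h
    · exact absurd (hsubA A h hvA hu) huA

lemma tight_sup (hsub : Submodular F) (hF0 : F ∅ = 0)
    (hle : ∀ A : Finset V, ∑ i ∈ A, s i ≤ F A)
    (I : Finset V) (T : V → Finset V)
    (hT : ∀ v ∈ I, ∑ i ∈ T v, s i = F (T v)) :
    ∑ i ∈ I.sup T, s i = F (I.sup T) := by
  induction I using Finset.induction_on with
  | empty => simp [hF0]
  | @insert x I hx ih =>
    rw [Finset.sup_insert, Finset.sup_eq_union]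
    exact (tight_union_inter hsub hle (hT x (Finset.mem_insert_self x I))
      (ih fun v hv => hT v (Finset.mem_insert_of_mem hv))).1

end Stmt5Aux

open Finset Stmt5Aux in
/-- Fujishige: if `s*` is the minimum norm point of `B(F)`, then
`A₋ = {v : s*ᵥ < 0}` and `A₀ = {v : s*ᵥ ≤ 0}` are the unique minimal and
maximal minimizers of `F`. -/
theorem stmt_5 {V : Type*} [Fintype V] [DecidableEq V]
    (F : Finset V → ℝ) (hsub : Submodular F) (hF0 : F ∅ = 0)
    (s : V → ℝ) (hs : s ∈ basePolytope F)
    (hmin : ∀ z ∈ basePolytope F, ∑ i : V, (s i) ^ 2 ≤ ∑ i : V, (z i) ^ 2) :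
    (∀ A : Finset V, F (Finset.univ.filter fun v => s v < 0) ≤ F A) ∧
    (∀ A : Finset V, F (Finset.univ.filter fun v => s v ≤ 0) ≤ F A) ∧
    (∀ A : Finset V, (∀ C : Finset V, F A ≤ F C) →
      (Finset.univ.filter fun v => s v < 0) ⊆ A ∧
      A ⊆ (Finset.univ.filter fun v => s v ≤ 0)) := by
  classical
  set Am : Finset V := univ.filter (fun v => s v < 0) with hAm
  set A0 : Finset V := univ.filter (fun v => s v ≤ 0) with hA0
  choose T hT1 hT2 hT3 using exists_min_tight hsub hs hmin
  -- T v ⊆ Am for v ∈ Am, T v ⊆ A0 for v ∈ A0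
  have hTAm : ∀ v ∈ Am, T v ⊆ Am := by
    intro v hv u hu
    rw [hAm, Finset.mem_filter] at hv ⊢
    exact ⟨Finset.mem_univ _, lt_of_le_of_lt (hT3 v u hu) hv.2⟩
  have hTA0 : ∀ v ∈ A0, T v ⊆ A0 := by
    intro v hv u hu
    rw [hA0, Finset.mem_filter] at hv ⊢
    exact ⟨Finset.mem_univ _, le_trans (hT3 v u hu) hv.2⟩
  have hsupeq : ∀ (I : Finset V), (∀ v ∈ I, T v ⊆ I) → I.sup T = I := by
    intro I hI
    apply le_antisymm
    · exact Finset.sup_le hI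
    · intro v hv
      exact Finset.mem_of_subset (Finset.le_sup (f := T) hv) (hT2 v)
  have htAm : ∑ i ∈ Am, s i = F Am := by
    rw [← hsupeq Am hTAm]
    exact tight_sup hsub hF0 hs.1 Am T (fun v _ => hT1 v)
  have htA0 : ∑ i ∈ A0, s i = F A0 := by
    rw [← hsupeq A0 hTA0]
    exact tight_sup hsub hF0 hs.1 A0 T (fun v _ => hT1 v)
  -- the candidate minimum value
  set m : ℝ := ∑ i : V, min (s i) 0 with hm
  have hmAm : ∑ i ∈ Am, s i = m := by
    rw [hm, ← Finset.sum_filter_add_sum_filter_not univ (fun v => s v < 0)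
      (fun i => min (s i) 0), ← hAm]
    have e1 : ∑ i ∈ Am, min (s i) 0 = ∑ i ∈ Am, s i := by
      apply Finset.sum_congr rfl
      intro i hi
      rw [hAm, Finset.mem_filter] at hi
      exact min_eq_left (le_of_lt hi.2)
    have e2 : ∑ i ∈ univ.filter (fun v => ¬ s v < 0), min (s i) 0 = 0 := by
      apply Finset.sum_eq_zero
      intro i hi
      rw [Finset.mem_filter] at hi
      exact min_eq_right (not_lt.mp hi.2)
    rw [e1, e2]; ring
  have hmA0 : ∑ i ∈ A0, s i = m := by
    rw [hm, ← Finset.sum_filter_add_sum_filter_not univ (fun v => s v ≤ 0)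
      (fun i => min (s i) 0), ← hA0]
    have e1 : ∑ i ∈ A0, min (s i) 0 = ∑ i ∈ A0, s i := by
      apply Finset.sum_congr rfl
      intro i hi
      rw [hA0, Finset.mem_filter] at hi
      exact min_eq_left hi.2
    have e2 : ∑ i ∈ univ.filter (fun v => ¬ s v ≤ 0), min (s i) 0 = 0 := by
      apply Finset.sum_eq_zero
      intro i hi
      rw [Finset.mem_filter] at hi
      exact min_eq_right (le_of_lt (not_le.mp hi.2))
    rw [e1, e2]; ring
  have hlow : ∀ A : Finset V, m ≤ F A := by
    intro A
    have hsplit : ∑ i ∈ A, min (s i) 0 + ∑ i ∈ Aᶜ, min (s i) 0 = m :=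
      Finset.sum_add_sum_compl A _
    have h1 : ∑ i ∈ Aᶜ, min (s i) 0 ≤ 0 :=
      Finset.sum_nonpos (fun i _ => min_le_right _ _)
    have h2 : ∑ i ∈ A, min (s i) 0 ≤ ∑ i ∈ A, s i :=
      Finset.sum_le_sum (fun i _ => min_le_left _ _)
    have h3 := hs.1 A
    linarith
  refine ⟨?_, ?_, ?_⟩
  · intro A; rw [← htAm, hmAm]; exact hlow A
  · intro A; rw [← htA0, hmA0]; exact hlow A
  · intro A hAmin
    have hFAle : F A ≤ m := by
      have := hAmin Am
      rw [← htAm, hmAm] at this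
      exact this
    have hsplit : ∑ i ∈ A, min (s i) 0 + ∑ i ∈ Aᶜ, min (s i) 0 = m :=
      Finset.sum_add_sum_compl A _
    have h1 : ∑ i ∈ Aᶜ, min (s i) 0 ≤ 0 :=
      Finset.sum_nonpos (fun i _ => min_le_right _ _)
    have h2 : ∑ i ∈ A, min (s i) 0 ≤ ∑ i ∈ A, s i :=
      Finset.sum_le_sum (fun i _ => min_le_left _ _)
    have h3 := hs.1 A
    have hb0 : ∑ i ∈ Aᶜ, min (s i) 0 = 0 := by linarith
    have hca : ∑ i ∈ A, s i = ∑ i ∈ A, min (s i) 0 := by linarith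
    constructor
    · intro v hv
      rw [hAm, Finset.mem_filter] at hv
      by_contra hvA
      have hvc : v ∈ Aᶜ := Finset.mem_compl.mpr hvA
      have := (Finset.sum_eq_zero_iff_of_nonpos
        (fun i _ => min_le_right (s i) 0)).mp hb0 v hvc
      have : min (s v) 0 < 0 := min_lt_of_left_lt hv.2
      linarith [(Finset.sum_eq_zero_iff_of_nonpos
        (fun i _ => min_le_right (s i) 0)).mp hb0 v hvc]
    · intro v hvA
      rw [hA0, Finset.mem_filter]
      refine ⟨Finset.mem_univ _, ?_⟩
      have hzero : ∑ i ∈ A, (s i - min (s i) 0) = 0 := by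
        rw [Finset.sum_sub_distrib]; linarith
      have := (Finset.sum_eq_zero_iff_of_nonneg
        (fun i _ => sub_nonneg.mpr (min_le_left (s i) 0))).mp hzero v hvA
      have hv : s v = min (s v) 0 := by linarith
      rw [hv]; exact min_le_right _ _
end

section
/- There exists a finite ground set V and a (non-submodular) set function F : 2^V → ℝ with F(∅)=0 such that no minimizer of D_∞(P‖Q) over factorized positive distributions Q has its modular parameter q being a global lower bound of F. Concretely, for V={1,2} with F(∅)=0, F({1})=−20, F({2})=−8, F({1,2})=−16 (a supermodular function), the optimal value of the program minimize ∑_i log(1+exp(−q_i)) + t subject to q(A) ≤ F(A)+t for all A is strictly smaller at t=1 than at t=0. -/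
/-- The concrete supermodular counterexample on `V = {1,2}`:
`F(∅)=0, F({1})=-20, F({2})=-8, F({1,2})=-16`. -/
noncomputable def Fce : Finset (Fin 2) → ℝ := fun A =>
  if A = ∅ then 0
  else if A = {0} then -20
  else if A = {1} then -8
  else -16

lemma log_one_add_exp_le (x : ℝ) : Real.log (1 + Real.exp x) ≤ x + Real.exp (-x) := by
  have h : (1 : ℝ) + Real.exp x = Real.exp x * (1 + Real.exp (-x)) := by
    rw [mul_add, mul_one, ← Real.exp_add]
    simp [add_comm]
  have hp : (0:ℝ) < 1 + Real.exp (-x) := by positivity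
  rw [h, Real.log_mul (Real.exp_pos x).ne' hp.ne', Real.log_exp]
  have := Real.log_le_sub_one_of_pos hp
  linarith

lemma le_log_one_add_exp (x : ℝ) : x ≤ Real.log (1 + Real.exp x) := by
  have hp : (0:ℝ) < 1 + Real.exp x := by positivity
  rw [Real.le_log_iff_exp_le hp]
  linarith [Real.exp_pos x]

/-- for the supermodular `Fce`, the program
`minimize ∑ᵢ log(1+exp(-qᵢ)) + t  s.t.  q(A) ≤ Fce(A)+t ∀A`
attains a strictly smaller value at `t = 1` than at `t = 0`: some `q` feasible
for `t = 1` beats every `q'` feasible for `t = 0`. -/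
theorem stmt_10 :
    ∃ q : Fin 2 → ℝ,
      (∀ A : Finset (Fin 2), ∑ i ∈ A, q i ≤ Fce A + 1) ∧
      ∀ q' : Fin 2 → ℝ, (∀ A : Finset (Fin 2), ∑ i ∈ A, q' i ≤ Fce A + 0) →
        (∑ i : Fin 2, Real.log (1 + Real.exp (-(q i)))) + 1
          < (∑ i : Fin 2, Real.log (1 + Real.exp (-(q' i)))) + 0 := by
  refine ⟨![-19, -7], ?_, ?_⟩
  · intro A
    fin_cases A <;> simp [Fce] <;> norm_num [Finset.ext_iff, Fin.forall_fin_two]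
  · intro q' hq'
    have h0 : q' 0 ≤ -20 := by simpa [Fce] using hq' {0}
    have h1 : q' 1 ≤ -8 := by simpa [Fce] using hq' {1}
    have b0 : (20:ℝ) ≤ Real.log (1 + Real.exp (-(q' 0))) := by
      have := le_log_one_add_exp (-(q' 0)); linarith
    have b1 : (8:ℝ) ≤ Real.log (1 + Real.exp (-(q' 1))) := by
      have := le_log_one_add_exp (-(q' 1)); linarith
    have c0 := log_one_add_exp_le (19 : ℝ)
    have c1 := log_one_add_exp_le (7 : ℝ)
    have e19 : Real.exp (-(19:ℝ)) ≤ Real.exp (-1) := by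
      apply Real.exp_le_exp.mpr; norm_num
    have e7 : Real.exp (-(7:ℝ)) ≤ Real.exp (-1) := by
      apply Real.exp_le_exp.mpr; norm_num
    have e1 : Real.exp (-(1:ℝ)) < 1/2 := by
      rw [Real.exp_neg]
      rw [inv_lt_comm₀ (Real.exp_pos 1) (by norm_num)]
      have := Real.exp_one_gt_d9
      linarith
    have lhs : ∑ i : Fin 2, Real.log (1 + Real.exp (-((![-19, -7] : Fin 2 → ℝ) i)))
        = Real.log (1 + Real.exp 19) + Real.log (1 + Real.exp 7) := by
      simp [Fin.sum_univ_two]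
    have rhs : ∑ i : Fin 2, Real.log (1 + Real.exp (-(q' i)))
        = Real.log (1 + Real.exp (-(q' 0))) + Real.log (1 + Real.exp (-(q' 1))) := by
      simp [Fin.sum_univ_two]
    rw [lhs, rhs]
    linarith
end

section
/- Let F : 2^V → ℝ be submodular with F(∅)=0 and β ≥ 0. Define F_β(∅)=0 and F_β(S) = F(S) + β for S ≠ ∅. Then F_β is submodular and normalized, and its Lovász extension is f_β(w) = f(w) + β·max_{i∈V} w_i for w in the nonnegative orthant, where f is the Lovász extension of F. -/
/-- The first `m` elements of the enumeration `j` of `V`. -/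
def prefixSet {V : Type*} [Fintype V] [DecidableEq V]
    (j : Fin (Fintype.card V) ≃ V) (m : ℕ) : Finset V :=
  (Finset.univ.filter fun a : Fin (Fintype.card V) => (a : ℕ) < m).image j

/-- The greedy (Lovász extension) value of `G` at `w`, computed along the
enumeration `j` (which is assumed to sort `w` in decreasing order). -/
noncomputable def greedyValue {V : Type*} [Fintype V] [DecidableEq V]
    (G : Finset V → ℝ) (w : V → ℝ) (j : Fin (Fintype.card V) ≃ V) : ℝ :=
  ∑ a : Fin (Fintype.card V),
    w (j a) * (G (prefixSet j ((a : ℕ) + 1)) - G (prefixSet j (a : ℕ)))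

lemma prefixSet_eq_empty_iff {V : Type*} [Fintype V] [DecidableEq V]
    (j : Fin (Fintype.card V) ≃ V) (m : ℕ) (hm : m ≤ Fintype.card V) :
    prefixSet j m = ∅ ↔ m = 0 := by
  constructor
  · intro h
    by_contra hm0
    have hpos : 0 < m := Nat.pos_of_ne_zero hm0
    have hcard : 0 < Fintype.card V := lt_of_lt_of_le hpos hm
    have : j ⟨0, hcard⟩ ∈ prefixSet j m := by
      simp [prefixSet]
      omega
    rw [h] at this
    exact absurd this (Finset.notMem_empty _)
  · rintro rfl
    simp [prefixSet]

/-- for submodular normalized `F` and `β ≥ 0`, the function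
`F_β` (equal to `F + β` on nonempty sets, `0` at `∅`) is submodular and
normalized, and its Lovász extension on the nonnegative orthant is
`f_β(w) = f(w) + β·maxᵢ wᵢ`. -/
theorem stmt_11 {V : Type*} [Fintype V] [DecidableEq V] [Nonempty V]
    (F : Finset V → ℝ) (hsub : Submodular F) (hF0 : F ∅ = 0)
    (β : ℝ) (hβ : 0 ≤ β) :
    Submodular (fun S : Finset V => if S = ∅ then 0 else F S + β) ∧
    (fun S : Finset V => if S = ∅ then (0 : ℝ) else F S + β) ∅ = 0 ∧
    ∀ (w : V → ℝ), (∀ i, 0 ≤ w i) →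
      ∀ j : Fin (Fintype.card V) ≃ V,
        (∀ a b : Fin (Fintype.card V), a ≤ b → w (j b) ≤ w (j a)) →
        greedyValue (fun S : Finset V => if S = ∅ then 0 else F S + β) w j
          = greedyValue F w j
            + β * Finset.univ.sup' Finset.univ_nonempty w := by
  refine ⟨?_, by simp, ?_⟩
  · intro A B hAB x hx
    by_cases hB : B = ∅
    · subst hB
      have hA : A = ∅ := Finset.subset_empty.mp hAB
      subst hA
      simp
    · have hA' : insert x A ≠ ∅ := by simp
      have hB' : insert x B ≠ ∅ := by simp
      by_cases hA : A = ∅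
      · subst hA
        simp only [hB, hA', hB', ite_false, ite_true, if_true, if_false, eq_self_iff_true, if_pos]
        have := hsub ∅ B (Finset.empty_subset B) x hx
        rw [hF0] at this
        linarith
      · simp only [hB, hA, hA', hB', ite_false, if_false]
        have := hsub A B hAB x hx
        linarith
  · intro w hw j hsort
    have hcard : 0 < Fintype.card V := Fintype.card_pos
    have hsup : Finset.univ.sup' Finset.univ_nonempty w = w (j ⟨0, hcard⟩) := by
      apply le_antisymm
      · apply Finset.sup'_le
        intro i _
        have := hsort ⟨0, hcard⟩ (j.symm i) (by simp [Fin.le_def])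
        simpa using this
      · exact Finset.le_sup' w (Finset.mem_univ _)
    rw [hsup, greedyValue, greedyValue]
    have key : ∀ a : Fin (Fintype.card V),
        w (j a) * ((if prefixSet j ((a : ℕ) + 1) = ∅ then 0 else F (prefixSet j ((a : ℕ) + 1)) + β)
          - (if prefixSet j (a : ℕ) = ∅ then 0 else F (prefixSet j (a : ℕ)) + β))
        = w (j a) * (F (prefixSet j ((a : ℕ) + 1)) - F (prefixSet j (a : ℕ)))
          + (if a = (⟨0, hcard⟩ : Fin (Fintype.card V)) then β * w (j a) else 0) := by
      intro a
      have h1 : prefixSet j ((a : ℕ) + 1) ≠ ∅ := by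
        rw [Ne, prefixSet_eq_empty_iff j _ a.2]
        simp
      rw [if_neg h1]
      by_cases ha : a = (⟨0, hcard⟩ : Fin (Fintype.card V))
      · subst ha
        have h0 : prefixSet j (0 : ℕ) = ∅ := by
          rw [prefixSet_eq_empty_iff j _ (Nat.zero_le _)]
        simp only [Fin.val_mk, h0, hF0, ite_true, if_true, eq_self_iff_true, if_pos]
        ring
      · have ha0 : (a : ℕ) ≠ 0 := by
          intro h
          exact ha (Fin.ext h)
        have h2 : prefixSet j (a : ℕ) ≠ ∅ := by
          rw [Ne, prefixSet_eq_empty_iff j _ (le_of_lt a.2)]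
          exact ha0
        rw [if_neg h2, if_neg ha]
        ring
    rw [Finset.sum_congr rfl (fun a _ => key a), Finset.sum_add_distrib,
      Finset.sum_ite_eq' Finset.univ (⟨0, hcard⟩ : Fin (Fintype.card V))]
    simp [mul_comm]
end

section
/- Let F : 2^V → ℝ be submodular with F(∅)=0, and for β ≥ 0 define OPT_β as the minimum of ∑_{i∈V} log(1+exp(−q_i)) + β over modular q satisfying q(A) ≤ F(A) + β for all nonempty A ⊆ V and q(∅) ≤ 0. Then OPT₀ ≤ OPT_β for all β ≥ 0; i.e., the problem minimize_{q,t} ∑_i log(1+e^{−q_i}) + t subject to q(A) ≤ F(A)+t attains its minimum at t = 0. -/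
open Finset


/-- `OPT β`: the optimal value of `∑ᵢ log(1+exp(-qᵢ)) + β` over modular `q`
with `q(A) ≤ F(A) + β` for all nonempty `A` (and `q(∅) = 0 ≤ 0` trivially). -/
noncomputable def OPT {V : Type*} [Fintype V] [DecidableEq V]
    (F : Finset V → ℝ) (β : ℝ) : ℝ :=
  sInf {x : ℝ | ∃ q : V → ℝ,
    (∀ A : Finset V, A.Nonempty → ∑ i ∈ A, q i ≤ F A + β) ∧
    x = (∑ i : V, Real.log (1 + Real.exp (-(q i)))) + β}



/-- Pairwise form of submodularity. -/
lemma submod_pair {V : Type*} [DecidableEq V] {F : Finset V → ℝ}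
    (hsub : ∀ A B : Finset V, A ⊆ B → ∀ x ∉ B,
      F (insert x B) - F B ≤ F (insert x A) - F A) :
    ∀ A B : Finset V, F (A ∪ B) + F (A ∩ B) ≤ F A + F B := by
  suffices h : ∀ n : ℕ, ∀ A B : Finset V, (A \ B).card = n →
      F (A ∪ B) + F (A ∩ B) ≤ F A + F B by
    intro A B; exact h _ A B rfl
  intro n
  induction n with
  | zero =>
    intro A B h
    have hAB : A ⊆ B := by
      rwa [Finset.card_eq_zero, Finset.sdiff_eq_empty_iff_subset] at h
    rw [Finset.union_eq_right.mpr hAB, Finset.inter_eq_left.mpr hAB]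
    ring_nf; exact le_rfl
  | succ n ih =>
    intro A B h
    have hne : (A \ B).Nonempty := by
      rw [← Finset.card_pos, h]; omega
    obtain ⟨x, hx⟩ := hne
    have hxA : x ∈ A := (Finset.mem_sdiff.mp hx).1
    have hxB : x ∉ B := (Finset.mem_sdiff.mp hx).2
    set A' := A.erase x with hA'
    have hxA' : x ∉ A' := Finset.notMem_erase _ _
    have hins : insert x A' = A := Finset.insert_erase hxA
    have hcard : (A' \ B).card = n := by
      have : A' \ B = (A \ B).erase x := by
        rw [hA', Finset.erase_sdiff_comm]
      rw [this, Finset.card_erase_of_mem hx, h]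
      omega
    have ihA := ih A' B hcard
    have hxAB : x ∉ A' ∪ B := by
      simp [hxA', hxB]
    have hdim := hsub A' (A' ∪ B) Finset.subset_union_left x hxAB
    have hu : insert x (A' ∪ B) = A ∪ B := by
      rw [← hins, Finset.insert_union]
    have hi : A ∩ B = A' ∩ B := by
      rw [← hins, Finset.insert_inter_of_notMem hxB]
    rw [hu, ← hins] at hdim
    rw [hi, ← hins]
    linarith

/-- Key lemma: a supermodular excess function bounded by ε (attained away from S)
can be covered by a nonnegative modular function of total mass ≤ ε. -/
lemma key {V : Type*} [Fintype V] [DecidableEq V] :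
    ∀ n : ℕ, ∀ S : Finset V, ∀ e : Finset V → ℝ, ∀ ε : ℝ,
      Sᶜ.card ≤ n →
      (∀ A B : Finset V, e A + e B ≤ e (A ∪ B) + e (A ∩ B)) →
      e ∅ = 0 →
      (∀ A, e A ≤ ε) →
      (∃ M : Finset V, Disjoint M S ∧ e M = ε) →
      ∃ d : V → ℝ, (∀ i, 0 ≤ d i) ∧ (∀ A : Finset V, e A ≤ ∑ i ∈ A, d i) ∧
        ∑ i, d i ≤ ε := by
  intro n
  induction n with
  | zero =>
    intro S e ε hcard hsup he0 hub ⟨M, hMS, hMε⟩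
    have hS : Sᶜ = ∅ := Finset.card_eq_zero.mp (Nat.le_zero.mp hcard)
    have hSuniv : S = Finset.univ := by
      rwa [Finset.compl_eq_empty_iff] at hS
    have hM : M = ∅ := by
      rw [hSuniv] at hMS
      exact Finset.eq_empty_of_forall_notMem fun y hy =>
        absurd (Finset.mem_univ y) (Finset.disjoint_left.mp hMS hy)
    refine ⟨0, fun i => le_rfl, ?_, ?_⟩
    · intro A
      simp only [Pi.zero_apply, Finset.sum_const_zero]
      calc e A ≤ ε := hub A
        _ = e ∅ := by rw [← hMε, hM]
        _ = 0 := he0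
    · simp only [Pi.zero_apply, Finset.sum_const_zero]
      rw [← hMε, hM, he0]
  | succ n ih =>
    intro S e ε hcard hsup he0 hub hM
    obtain ⟨M, hMS, hMε⟩ := hM
    by_cases hSne : Sᶜ.Nonempty
    · obtain ⟨i, hi⟩ := hSne
      -- maximizer among sets not containing i
      obtain ⟨B, hBmem, hBmax⟩ := Finset.exists_max_image
        ((Finset.univ : Finset (Finset V)).filter (fun A => i ∉ A)) e
        ⟨∅, by simp⟩
      have hiB : i ∉ B := (Finset.mem_filter.mp hBmem).2
      set m := e B with hm
      have hmax : ∀ A : Finset V, i ∉ A → e A ≤ m := by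
        intro A hA; exact hBmax A (by simp [hA])
      have hm0 : 0 ≤ m := he0 ▸ hmax ∅ (by simp)
      have hmε : m ≤ ε := hub B
      set δ := ε - m with hδ
      have hδ0 : 0 ≤ δ := by linarith
      set e₁ := fun A : Finset V => e A - if i ∈ A then δ else 0 with he₁
      have hsup₁ : ∀ A B : Finset V, e₁ A + e₁ B ≤ e₁ (A ∪ B) + e₁ (A ∩ B) := by
        intro A C
        have := hsup A C
        have hind : (if i ∈ A ∪ C then δ else 0) + (if i ∈ A ∩ C then δ else 0)
            = (if i ∈ A then δ else 0) + (if i ∈ C then δ else 0) := by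
          by_cases hA : i ∈ A <;> by_cases hC : i ∈ C <;>
            simp [Finset.mem_union, Finset.mem_inter, hA, hC]
        simp only [he₁]
        linarith
      have he₁0 : e₁ ∅ = 0 := by simp [he₁, he0]
      have hub₁ : ∀ A, e₁ A ≤ m := by
        intro A
        by_cases hA : i ∈ A
        · simp only [he₁, if_pos hA]
          have := hub A; linarith
        · simp only [he₁, if_neg hA, sub_zero]
          exact hmax A hA
      have hiM : i ∉ B ∩ M := by simp [hiB]
      have hBM : e (B ∩ M) = m := by
        have h1 : e (B ∩ M) ≤ m := hmax _ hiM
        have h2 : e B + e M ≤ e (B ∪ M) + e (B ∩ M) := hsup B M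
        have h3 : e (B ∪ M) ≤ ε := hub _
        rw [hMε] at h2
        linarith
      have hwit : ∃ M' : Finset V, Disjoint M' (insert i S) ∧ e₁ M' = m := by
        refine ⟨B ∩ M, ?_, ?_⟩
        · rw [Finset.disjoint_insert_right]
          exact ⟨hiM, Finset.disjoint_of_subset_left Finset.inter_subset_right hMS⟩
        · simp only [he₁, if_neg hiM, sub_zero]; exact hBM
      have hcard' : (insert i S)ᶜ.card ≤ n := by
        rw [Finset.compl_insert, Finset.card_erase_of_mem hi]
        omega
      obtain ⟨d₁, hd₁0, hd₁A, hd₁sum⟩ := ih (insert i S) e₁ m hcard' hsup₁ he₁0 hub₁ hwit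
      refine ⟨fun j => d₁ j + if j = i then δ else 0, ?_, ?_, ?_⟩
      · intro j
        by_cases h : j = i
        · subst h; have h1 := hd₁0 j; simp; linarith
        · have h1 := hd₁0 j; simp [h]; linarith
      · intro A
        have hsum : ∑ j ∈ A, (d₁ j + if j = i then δ else 0)
            = (∑ j ∈ A, d₁ j) + (if i ∈ A then δ else 0) := by
          rw [Finset.sum_add_distrib, Finset.sum_ite_eq' A i (fun _ => δ)]
        rw [hsum]
        have := hd₁A A
        simp only [he₁] at this
        linarith
      · have hsum : ∑ j, (d₁ j + if j = i then δ else 0)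
            = (∑ j, d₁ j) + δ := by
          rw [Finset.sum_add_distrib, Finset.sum_ite_eq' Finset.univ i (fun _ => δ),
            if_pos (Finset.mem_univ i)]
        rw [hsum]
        linarith
    · -- Sᶜ empty: same as base case
      rw [Finset.not_nonempty_iff_eq_empty] at hSne
      have hSuniv : S = Finset.univ := by rwa [Finset.compl_eq_empty_iff] at hSne
      have hMe : M = ∅ := by
        rw [hSuniv] at hMS
        exact Finset.eq_empty_of_forall_notMem fun y hy =>
          absurd (Finset.mem_univ y) (Finset.disjoint_left.mp hMS hy)
      refine ⟨0, fun i => le_rfl, ?_, ?_⟩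
      · intro A
        simp only [Pi.zero_apply, Finset.sum_const_zero]
        calc e A ≤ ε := hub A
          _ = 0 := by rw [← hMε, hMe, he0]
      · simp only [Pi.zero_apply, Finset.sum_const_zero]
        rw [← hMε, hMe, he0]

lemma log_shift (x t : ℝ) (ht : 0 ≤ t) :
    Real.log (1 + Real.exp (x + t)) ≤ t + Real.log (1 + Real.exp x) := by
  have h1 : (0:ℝ) < 1 + Real.exp (x + t) := by positivity
  have h2 : (0:ℝ) < 1 + Real.exp x := by positivity
  have hle : 1 + Real.exp (x + t) ≤ Real.exp t * (1 + Real.exp x) := by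
    rw [mul_add, mul_one, ← Real.exp_add]
    have : (1:ℝ) ≤ Real.exp t := Real.one_le_exp ht
    rw [add_comm t x]
    linarith
  calc Real.log (1 + Real.exp (x + t)) ≤ Real.log (Real.exp t * (1 + Real.exp x)) :=
        Real.log_le_log h1 hle
    _ = t + Real.log (1 + Real.exp x) := by
        rw [Real.log_mul (Real.exp_ne_zero t) (ne_of_gt h2), Real.log_exp]

lemma log_term_nonneg (x : ℝ) : 0 ≤ Real.log (1 + Real.exp x) :=
  Real.log_nonneg (by linarith [Real.exp_pos x])


/-- for submodular normalized `F`, the program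
`min_{q,t} ∑ᵢ log(1+e^{-qᵢ}) + t  s.t.  q(A) ≤ F(A)+t` attains its minimum at
`t = 0`: `OPT 0 ≤ OPT β` for every `β ≥ 0`. -/
theorem stmt_13 {V : Type*} [Fintype V] [DecidableEq V]
    (F : Finset V → ℝ) (hsub : Submodular F) (hF0 : F ∅ = 0) :
    ∀ β : ℝ, 0 ≤ β → OPT F 0 ≤ OPT F β := by
  intro β hβ
  set S0 := {x : ℝ | ∃ q : V → ℝ,
    (∀ A : Finset V, A.Nonempty → ∑ i ∈ A, q i ≤ F A + 0) ∧
    x = (∑ i : V, Real.log (1 + Real.exp (-(q i)))) + 0} with hS0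
  have hbdd : BddBelow S0 := by
    refine ⟨0, fun x hx => ?_⟩
    obtain ⟨q, _, rfl⟩ := hx
    have : 0 ≤ ∑ i : V, Real.log (1 + Real.exp (-(q i))) :=
      Finset.sum_nonneg fun i _ => log_term_nonneg _
    linarith
  -- the β-feasible set is nonempty
  have hne : {x : ℝ | ∃ q : V → ℝ,
      (∀ A : Finset V, A.Nonempty → ∑ i ∈ A, q i ≤ F A + β) ∧
      x = (∑ i : V, Real.log (1 + Real.exp (-(q i)))) + β}.Nonempty := by
    obtain ⟨M, _, hMmax⟩ := Finset.exists_max_image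
      (Finset.univ : Finset (Finset V)) (fun A => -(F A + β)) ⟨∅, Finset.mem_univ _⟩
    set C := max 0 (-(F M + β)) with hC
    refine ⟨_, fun _ => -C, fun A hA => ?_, rfl⟩
    have h1 : ∑ i ∈ A, (-C : ℝ) = -(A.card : ℝ) * C := by
      rw [Finset.sum_const, nsmul_eq_mul]; ring
    have hC0 : 0 ≤ C := le_max_left _ _
    have hcard1 : (1 : ℝ) ≤ A.card := by
      have := Finset.card_pos.mpr hA
      exact_mod_cast this
    have h2 : -(F A + β) ≤ C :=
      le_trans (hMmax A (Finset.mem_univ A)) (le_max_right _ _)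
    have : -(A.card : ℝ) * C ≤ -C := by nlinarith
    linarith [h1 ▸ this]
  unfold OPT
  refine le_csInf hne ?_
  rintro x ⟨q, hq, rfl⟩
  -- excess function
  set e := fun A : Finset V => (∑ i ∈ A, q i) - F A with he
  have hsup : ∀ A B : Finset V, e A + e B ≤ e (A ∪ B) + e (A ∩ B) := by
    intro A B
    have hF := submod_pair hsub A B
    have hq2 : (∑ i ∈ A ∪ B, q i) + (∑ i ∈ A ∩ B, q i)
        = (∑ i ∈ A, q i) + (∑ i ∈ B, q i) := Finset.sum_union_inter
    simp only [he]
    linarith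
  have he0 : e ∅ = 0 := by simp [he, hF0]
  obtain ⟨M, _, hMmax⟩ := Finset.exists_max_image
    (Finset.univ : Finset (Finset V)) e ⟨∅, Finset.mem_univ _⟩
  set ε := e M with hε
  have hub : ∀ A, e A ≤ ε := fun A => hMmax A (Finset.mem_univ A)
  have hεβ : ε ≤ β := by
    rcases M.eq_empty_or_nonempty with hM | hM
    · rw [hε, hM, he0]; exact hβ
    · have := hq M hM
      simp only [hε, he]; linarith
  obtain ⟨d, hd0, hdA, hdsum⟩ := key ((∅ : Finset V))ᶜ.card ∅ e ε
    le_rfl hsup he0 hub ⟨M, Finset.disjoint_empty_right M, rfl⟩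
  -- the shifted point
  set q' := fun i => q i - d i with hq'
  have hfeas : ∀ A : Finset V, A.Nonempty → ∑ i ∈ A, q' i ≤ F A + 0 := by
    intro A _
    have h1 : ∑ i ∈ A, q' i = (∑ i ∈ A, q i) - ∑ i ∈ A, d i := by
      simp [hq', Finset.sum_sub_distrib]
    have h2 := hdA A
    simp only [he] at h2
    rw [h1]
    linarith
  have hmem : ((∑ i : V, Real.log (1 + Real.exp (-(q' i)))) + 0) ∈ S0 :=
    ⟨q', hfeas, rfl⟩
  have hle : (∑ i : V, Real.log (1 + Real.exp (-(q' i)))) + 0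
      ≤ (∑ i : V, Real.log (1 + Real.exp (-(q i)))) + β := by
    have hterm : ∀ i : V, Real.log (1 + Real.exp (-(q' i)))
        ≤ d i + Real.log (1 + Real.exp (-(q i))) := by
      intro i
      have : -(q' i) = -(q i) + d i := by simp [hq']; ring
      rw [this]
      exact log_shift (-(q i)) (d i) (hd0 i)
    have := Finset.sum_le_sum (fun i (_ : i ∈ Finset.univ) => hterm i)
    rw [Finset.sum_add_distrib] at this
    linarith
  exact le_trans (csInf_le hbdd hmem) hle
end

section
/- Consider a connected weighted graph on vertex set I obtained from a k-regular bipartite factor graph structure (every variable v ∈ V appears in exactly k factor-partition cells on each side), with edge weights |A_{r_i,m_i} ∩ A_{r_j,m_j}| between distinct cells. The volume of this graph is |V|(k²−k), every cut has weight at least k−1, and hence the Cheeger constant satisfies h ≥ 2/(|V|k). -/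
private lemma cross_of_walk {α : Type*} {G : SimpleGraph α} {U : Set α} :
    ∀ {i j : α}, G.Walk i j → i ∈ U → j ∉ U → ∃ a b, a ∈ U ∧ b ∉ U ∧ G.Adj a b := by
  intro i j w
  induction w with
  | nil => intro h h'; exact absurd h h'
  | @cons x y z h p ih =>
    intro hi hj
    by_cases hc : y ∈ U
    · exact ih hc hj
    · exact ⟨_, _, hi, hc, h⟩

private lemma per_v {ι : Type*} [Fintype ι] [DecidableEq ι] {V : Type*} [DecidableEq V]
    (A : ι → Finset V) (v : V) (k : ℕ)
    (hv : (Finset.univ.filter fun i => v ∈ A i).card = k) :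
    ∑ i : ι, ∑ j ∈ Finset.univ.erase i,
      (if v ∈ A i then 1 else 0) * (if v ∈ A j then 1 else 0) = k * (k - 1) := by
  set S := Finset.univ.filter fun i => v ∈ A i with hS
  have inner : ∀ i : ι, ∑ j ∈ Finset.univ.erase i, (if v ∈ A j then (1:ℕ) else 0)
      = (S.erase i).card := by
    intro i
    rw [show S.erase i = (Finset.univ.erase i).filter (fun j => v ∈ A j) by
      ext j; simp [hS, Finset.mem_erase, and_left_comm, and_comm], Finset.card_filter]
  calc ∑ i : ι, ∑ j ∈ Finset.univ.erase i,
        (if v ∈ A i then 1 else 0) * (if v ∈ A j then (1:ℕ) else 0)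
      = ∑ i : ι, (if v ∈ A i then (S.erase i).card else 0) := by
        refine Finset.sum_congr rfl fun i _ => ?_
        rw [← Finset.mul_sum, inner]
        by_cases h : v ∈ A i <;> simp [h]
    _ = ∑ i ∈ S, (S.erase i).card := by rw [hS, Finset.sum_filter]
    _ = ∑ i ∈ S, (k - 1) := by
        refine Finset.sum_congr rfl fun i hi => ?_
        rw [Finset.card_erase_of_mem hi, hv]
    _ = k * (k - 1) := by rw [Finset.sum_const, hv, smul_eq_mul]

/-- in the connected weighted graph on the cells `A i` with edge
weights `|A i ∩ A j|`, where every element of `V` lies in exactly `k` cells,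
the volume is `|V|(k²-k)`, every nontrivial cut has weight at least `k-1`, and
hence the Cheeger constant satisfies `h ≥ 2/(|V|k)`. -/
theorem stmt_16 {V ι : Type*} [Fintype V] [Fintype ι] [DecidableEq ι]
    [Nonempty ι] [DecidableEq V]
    (A : ι → Finset V) (k : ℕ) (hk : 2 ≤ k)
    (hreg : ∀ v : V, (Finset.univ.filter fun i => v ∈ A i).card = k)
    (hconn : (SimpleGraph.fromRel fun i j : ι => (A i ∩ A j).Nonempty).Connected) :
    (∑ i : ι, ∑ j ∈ Finset.univ.erase i, (A i ∩ A j).card)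
        = Fintype.card V * (k ^ 2 - k) ∧
    ∀ U : Finset ι, U.Nonempty → U ≠ Finset.univ →
      ((k : ℝ) - 1 ≤ ∑ i ∈ U, ∑ j ∈ Uᶜ, ((A i ∩ A j).card : ℝ)) ∧
      (2 : ℝ) / (Fintype.card V * k) ≤
        (∑ i ∈ U, ∑ j ∈ Uᶜ, ((A i ∩ A j).card : ℝ)) /
          min (∑ i ∈ U, ∑ j ∈ Finset.univ.erase i, ((A i ∩ A j).card : ℝ))
              (∑ i ∈ Uᶜ, ∑ j ∈ Finset.univ.erase i, ((A i ∩ A j).card : ℝ)) := by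
  classical
  have hcard : ∀ i j : ι, (A i ∩ A j).card
      = ∑ v : V, (if v ∈ A i then 1 else 0) * (if v ∈ A j then (1:ℕ) else 0) := by
    intro i j
    rw [show A i ∩ A j = Finset.univ.filter (fun v => v ∈ A i ∧ v ∈ A j) by
      ext v; simp [Finset.mem_inter], Finset.card_filter]
    refine Finset.sum_congr rfl fun v _ => ?_
    by_cases h1 : v ∈ A i <;> by_cases h2 : v ∈ A j <;> simp [h1, h2]
  have part1 : (∑ i : ι, ∑ j ∈ Finset.univ.erase i, (A i ∩ A j).card)
      = Fintype.card V * (k ^ 2 - k) := by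
    calc ∑ i : ι, ∑ j ∈ Finset.univ.erase i, (A i ∩ A j).card
        = ∑ i : ι, ∑ j ∈ Finset.univ.erase i, ∑ v : V,
            (if v ∈ A i then 1 else 0) * (if v ∈ A j then 1 else 0) := by
          simp_rw [hcard]
      _ = ∑ v : V, ∑ i : ι, ∑ j ∈ Finset.univ.erase i,
            (if v ∈ A i then 1 else 0) * (if v ∈ A j then 1 else 0) := by
          rw [Finset.sum_comm]
          refine Finset.sum_congr rfl fun i _ => Finset.sum_comm
      _ = ∑ v : V, k * (k - 1) := Finset.sum_congr rfl fun v _ => per_v A v k (hreg v)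
      _ = Fintype.card V * (k ^ 2 - k) := by
          rw [Finset.sum_const, smul_eq_mul, Finset.card_univ]
          rw [Nat.mul_sub_one, ← pow_two]
  refine ⟨part1, fun U hU hU' => ?_⟩
  obtain ⟨i0, hi0⟩ := hU
  obtain ⟨j1, hj1⟩ : ∃ j, j ∉ U := by
    by_contra h
    push_neg at h
    exact hU' (Finset.eq_univ_of_forall h)
  obtain ⟨a, b, ha, hb, hab⟩ := cross_of_walk (U := (↑U : Set ι))
    ((hconn.preconnected i0 j1).some) (by exact_mod_cast hi0) (by exact_mod_cast hj1)
  have habn : (A a ∩ A b).Nonempty := by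
    rw [SimpleGraph.fromRel_adj] at hab
    rcases hab.2 with h | h
    · exact h
    · rwa [Finset.inter_comm]
  obtain ⟨v, hv⟩ := habn
  rw [Finset.mem_inter] at hv
  have ha' : a ∈ U := by exact_mod_cast ha
  have hb' : b ∈ Uᶜ := by simpa using hb
  set aU : ℕ := (U.filter fun i => v ∈ A i).card with haU
  set bU : ℕ := (Uᶜ.filter fun i => v ∈ A i).card with hbU
  have hab_sum : aU + bU = k := by
    rw [haU, hbU, ← Finset.card_union_of_disjoint
      (Finset.disjoint_filter_filter disjoint_compl_right),
      ← Finset.filter_union, Finset.union_compl, ← hreg v]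
  have haU1 : 1 ≤ aU := Finset.card_pos.mpr ⟨a, Finset.mem_filter.mpr ⟨ha', hv.1⟩⟩
  have hbU1 : 1 ≤ bU := Finset.card_pos.mpr ⟨b, Finset.mem_filter.mpr ⟨hb', hv.2⟩⟩
  have hcut_nat : k - 1 ≤ ∑ i ∈ U, ∑ j ∈ Uᶜ, (A i ∩ A j).card := by
    have h1 : ∑ i ∈ U, ∑ j ∈ Uᶜ, ((if v ∈ A i then 1 else 0) * (if v ∈ A j then (1:ℕ) else 0))
        ≤ ∑ i ∈ U, ∑ j ∈ Uᶜ, (A i ∩ A j).card := by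
      refine Finset.sum_le_sum fun i _ => Finset.sum_le_sum fun j _ => ?_
      rw [hcard i j]
      exact Finset.single_le_sum
        (f := fun w => (if w ∈ A i then 1 else 0) * (if w ∈ A j then (1:ℕ) else 0))
        (fun w _ => Nat.zero_le _) (Finset.mem_univ v)
    have h2 : ∑ i ∈ U, ∑ j ∈ Uᶜ, ((if v ∈ A i then 1 else 0) * (if v ∈ A j then (1:ℕ) else 0))
        = aU * bU := by
      rw [← Finset.sum_mul_sum, haU, hbU, Finset.card_filter, Finset.card_filter]
    have h3 : ∀ x y : ℕ, 1 ≤ x → 1 ≤ y → x + y = k → k - 1 ≤ x * y := by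
      intro x y hx hy hxy
      obtain ⟨x', rfl⟩ := Nat.exists_eq_add_of_le hx
      obtain ⟨y', rfl⟩ := Nat.exists_eq_add_of_le hy
      have : (1 + x') * (1 + y') = 1 + x' + y' + x' * y' := by ring
      omega
    have := h3 aU bU haU1 hbU1 hab_sum
    omega
  set w : ι → ι → ℝ := fun i j => ((A i ∩ A j).card : ℝ) with hw
  have hwnn : ∀ i j, 0 ≤ w i j := fun i j => Nat.cast_nonneg _
  have hwsymm : ∀ i j, w i j = w j i := by intro i j; simp [hw, Finset.inter_comm]
  have hcut : (k : ℝ) - 1 ≤ ∑ i ∈ U, ∑ j ∈ Uᶜ, w i j := by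
    have h := (Nat.cast_le (α := ℝ)).mpr hcut_nat
    push_cast [Nat.cast_sub (by omega : 1 ≤ k)] at h
    exact h
  refine ⟨hcut, ?_⟩
  set cut : ℝ := ∑ i ∈ U, ∑ j ∈ Uᶜ, w i j with hcutdef
  set volU : ℝ := ∑ i ∈ U, ∑ j ∈ Finset.univ.erase i, w i j with hvolU
  set volUc : ℝ := ∑ i ∈ Uᶜ, ∑ j ∈ Finset.univ.erase i, w i j with hvolUc
  have hk1 : (0:ℝ) < (k:ℝ) - 1 := by
    have : (2:ℝ) ≤ k := by exact_mod_cast hk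
    linarith
  have hcutpos : 0 < cut := lt_of_lt_of_le hk1 hcut
  have hcut_le_volU : cut ≤ volU := by
    refine Finset.sum_le_sum fun i hi => ?_
    refine Finset.sum_le_sum_of_subset_of_nonneg ?_ (fun j _ _ => hwnn i j)
    intro j hj
    refine Finset.mem_erase.mpr ⟨?_, Finset.mem_univ j⟩
    rintro rfl; exact (Finset.mem_compl.mp hj) hi
  have hcut_le_volUc : cut ≤ volUc := by
    have hcc : cut = ∑ i ∈ Uᶜ, ∑ j ∈ U, w i j := by
      rw [hcutdef, Finset.sum_comm]
      exact Finset.sum_congr rfl fun i _ => Finset.sum_congr rfl fun j _ => hwsymm j i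
    rw [hcc]
    refine Finset.sum_le_sum fun i hi => ?_
    refine Finset.sum_le_sum_of_subset_of_nonneg ?_ (fun j _ _ => hwnn i j)
    intro j hj
    refine Finset.mem_erase.mpr ⟨?_, Finset.mem_univ j⟩
    rintro rfl; exact (Finset.mem_compl.mp hi) hj
  have hminpos : 0 < min volU volUc := lt_min (lt_of_lt_of_le hcutpos hcut_le_volU)
    (lt_of_lt_of_le hcutpos hcut_le_volUc)
  have hvolsum : volU + volUc = (Fintype.card V : ℝ) * k * (k - 1) := by
    have hsplit : volU + volUc = ∑ i : ι, ∑ j ∈ Finset.univ.erase i, w i j := by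
      rw [hvolU, hvolUc, ← Finset.sum_union disjoint_compl_right, Finset.union_compl]
    rw [hsplit]
    have h := congrArg (fun n : ℕ => (n : ℝ)) part1
    push_cast [Nat.cast_sub (by nlinarith : k ≤ k^2)] at h
    rw [hw]
    push_cast
    rw [h]
    ring
  have hkR : (2:ℝ) ≤ k := by exact_mod_cast hk
  have hVpos : (1 : ℝ) ≤ Fintype.card V := by
    have : 0 < Fintype.card V := Fintype.card_pos_iff.mpr ⟨v⟩
    exact_mod_cast this
  have key : (2 : ℝ) / (Fintype.card V * k) ≤ ((k:ℝ) - 1) / min volU volUc := by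
    rw [div_le_div_iff₀ (by positivity) hminpos]
    have h2min : 2 * min volU volUc ≤ volU + volUc := by
      have h1 := min_le_left volU volUc
      have h2 := min_le_right volU volUc
      linarith
    calc 2 * min volU volUc ≤ volU + volUc := h2min
      _ = ((k:ℝ) - 1) * (Fintype.card V * k) := by rw [hvolsum]; ring
  exact le_trans key ((div_le_div_iff_of_pos_right hminpos).mpr hcut)
end

section
/- In a connected weighted graph where every vertex cut separating cells containing a common element v splits the k cells containing v into groups of sizes m and k−m (1 ≤ m ≤ k−1), the cut weight is at least m(k−m) ≥ k−1. Combined with Cheeger's inequality λ₂ ≥ h²/2, the second-smallest eigenvalue of the normalized Laplacian satisfies λ₂ ≥ 2/(k²|V|²). -/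
/-!
Each element `v` lies in `k` cells, split by a cut into `m` cells inside and `k - m` outside, and
every such pair of cells meets in `v`; this gives the cut bound.

For the spectral bound write `x i = √|A i| · y i`. Since every element lies in `k` cells, the
quadratic form of the normalized Laplacian is `Q(y) / (2(k - 1))` with
`Q(y) = ∑ᵢⱼ |A i ∩ A j| (y i - y j)²`, while `∑ x i² = ∑ |A i| y i²` and the orthogonality
constraint says that the `|A i|`-weighted mean of `y` vanishes.
Along a shortest path of the intersection graph the intersections of consecutive cells are
pairwise disjoint, so the diameter is at most `|V|`, and Cauchy–Schwarz along such a path bounds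
every `(y i - y j)²` by `|V| · Q(y) / 2`. The weighted variance identity
`∑ᵢⱼ aᵢ aⱼ (y i - y j)² = 2 (∑ a) (∑ a y²)` for `∑ a y = 0` then gives the bound.
-/

open Finset

lemma Nat.sub_one_le_mul_sub {m k : ℕ} (h1 : 1 ≤ m) (h2 : m ≤ k - 1) : k - 1 ≤ m * (k - m) := by
  obtain ⟨a, rfl⟩ := Nat.exists_eq_add_of_le' h1
  obtain ⟨b, rfl⟩ : ∃ b, k = a + 1 + (b + 1) := ⟨k - a - 2, by omega⟩
  rw [Nat.add_sub_cancel_left, show a + 1 + (b + 1) - 1 = a + b + 1 by omega]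
  nlinarith

namespace SimpleGraph.Walk

variable {α : Type*} {G : SimpleGraph α} {u v : α}

lemma not_adj_getVert_of_length_eq_dist {p : G.Walk u v} (hp : p.length = G.dist u v)
    {t s : ℕ} (hts : t + 2 ≤ s) (hs : s ≤ p.length) :
    ¬ G.Adj (p.getVert t) (p.getVert s) := fun h => by
  have := dist_le ((p.take t).append (cons h (p.drop s)))
  simp only [length_append, take_length, length_cons, drop_length] at this
  omega

lemma sq_sub_le_length_mul_sum_sq (p : G.Walk u v) (f : α → ℝ) :
    (f u - f v) ^ 2 ≤ p.length *
      ∑ t ∈ range p.length, (f (p.getVert t) - f (p.getVert (t + 1))) ^ 2 := by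
  have htel : f u - f v = ∑ t ∈ range p.length, (f (p.getVert t) - f (p.getVert (t + 1))) := by
    rw [sum_range_sub' (fun t => f (p.getVert t)), p.getVert_zero, p.getVert_length]
  simpa [htel] using sq_sum_le_card_mul_sum_sq (s := range p.length)
    (f := fun t => f (p.getVert t) - f (p.getVert (t + 1)))

/-- The steps of a path, taken in both directions, are distinct ordered pairs. -/
lemma IsPath.two_mul_sum_le [Fintype α] {p : G.Walk u v} (hp : p.IsPath) {g : α → α → ℝ}
    (hg : ∀ a b, 0 ≤ g a b) (hsymm : ∀ a b, g a b = g b a) :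
    2 * ∑ t ∈ range p.length, g (p.getVert t) (p.getVert (t + 1)) ≤ ∑ a, ∑ b, g a b := by
  classical
  have hinj {t s : ℕ} (ht : t ≤ p.length) (hs : s ≤ p.length) (h : p.getVert t = p.getVert s) :
      t = s := hp.getVert_injOn ht hs h
  set fwd := (range p.length).image fun t => (p.getVert t, p.getVert (t + 1))
  set bwd := (range p.length).image fun t => (p.getVert (t + 1), p.getVert t)
  have hfwd : ∑ e ∈ fwd, g e.1 e.2 =
      ∑ t ∈ range p.length, g (p.getVert t) (p.getVert (t + 1)) :=
    sum_image fun t ht s hs h => by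
      simp only [coe_range, Set.mem_Iio] at ht hs
      exact hinj ht.le hs.le (Prod.ext_iff.mp h).1
  have hbwd : ∑ e ∈ bwd, g e.1 e.2 =
      ∑ t ∈ range p.length, g (p.getVert t) (p.getVert (t + 1)) := by
    rw [sum_image fun t ht s hs h => by
      simp only [coe_range, Set.mem_Iio] at ht hs
      exact hinj ht.le hs.le (Prod.ext_iff.mp h).2]
    exact sum_congr rfl fun t _ => hsymm _ _
  have hdisj : Disjoint fwd bwd := by
    refine Finset.disjoint_left.mpr ?_
    simp only [fwd, bwd, mem_image, mem_range]
    rintro _ ⟨t, ht, rfl⟩ ⟨s, hs, h⟩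
    have h1 := hinj (by omega) (by omega) (Prod.ext_iff.mp h).1
    have h2 := hinj (by omega) (by omega) (Prod.ext_iff.mp h).2
    omega
  calc 2 * ∑ t ∈ range p.length, g (p.getVert t) (p.getVert (t + 1))
      = ∑ e ∈ fwd ∪ bwd, g e.1 e.2 := by rw [sum_union hdisj, hfwd, hbwd]; ring
    _ ≤ ∑ e : α × α, g e.1 e.2 :=
      sum_le_sum_of_subset_of_nonneg (subset_univ _) fun e _ _ => hg _ _
    _ = ∑ a, ∑ b, g a b := Fintype.sum_prod_type _

end SimpleGraph.Walk

section WeightedSums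

variable {ι : Type*} [Fintype ι]

lemma sum_sum_mul_sub_sq {R : Type*} [CommRing R] {w : ι → ι → R} (hw : ∀ i j, w i j = w j i)
    (y : ι → R) :
    ∑ i, ∑ j, w i j * (y i - y j) ^ 2 =
      2 * ∑ i, (∑ j, w i j) * y i ^ 2 - 2 * ∑ i, ∑ j, w i j * y i * y j := by
  have hswap : ∑ i, ∑ j, w i j * y j ^ 2 = ∑ i, (∑ j, w i j) * y i ^ 2 := by
    rw [sum_comm]; simp_rw [sum_mul, hw]
  have hexpand : ∀ i j, w i j * (y i - y j) ^ 2 =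
      w i j * y i ^ 2 + w i j * y j ^ 2 - 2 * (w i j * y i * y j) := fun i j => by ring
  simp only [hexpand, sum_sub_distrib, sum_add_distrib, ← mul_sum, hswap, sum_mul]
  ring

lemma two_mul_sum_mul_sq_le {a y : ι → ℝ} (ha : ∀ i, 0 ≤ a i) (hy : ∑ i, a i * y i = 0)
    {M : ℝ} (hM : ∀ i j, (y i - y j) ^ 2 ≤ M) :
    2 * (∑ i, a i) * ∑ i, a i * y i ^ 2 ≤ (∑ i, a i) ^ 2 * M := by
  have hvar := sum_sum_mul_sub_sq (w := fun i j => a i * a j) (fun i j => mul_comm _ _) y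
  have hcross : ∑ i, ∑ j, a i * a j * y i * y j = (∑ i, a i * y i) ^ 2 := by
    simp_rw [sq, sum_mul_sum]; exact sum_congr rfl fun i _ => sum_congr rfl fun j _ => by ring
  have hdeg : ∑ i, (∑ j, a i * a j) * y i ^ 2 = (∑ i, a i) * ∑ i, a i * y i ^ 2 := by
    rw [mul_sum]; exact sum_congr rfl fun i _ => by rw [← mul_sum]; ring
  calc 2 * (∑ i, a i) * ∑ i, a i * y i ^ 2 = ∑ i, ∑ j, a i * a j * (y i - y j) ^ 2 := by
        rw [hvar, hcross, hdeg, hy]; ring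
    _ ≤ ∑ i, ∑ j, a i * a j * M :=
        sum_le_sum fun i _ => sum_le_sum fun j _ =>
          mul_le_mul_of_nonneg_left (hM i j) (mul_nonneg (ha i) (ha j))
    _ = (∑ i, a i) ^ 2 * M := by rw [sq, sum_mul_sum, sum_mul]; simp_rw [sum_mul]

end WeightedSums

section CellIntersection

variable {V ι : Type*} [DecidableEq V]

def intersectionGraph (A : ι → Finset V) : SimpleGraph ι :=
  SimpleGraph.fromRel fun i j => (A i ∩ A j).Nonempty

noncomputable def cellLaplacian [DecidableEq ι] (A : ι → Finset V) (k : ℕ) (i j : ι) : ℝ :=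
  if i = j then 1
  else -(1 / ((k : ℝ) - 1)) * (#(A i ∩ A j) : ℝ) / Real.sqrt ((#(A i) : ℝ) * (#(A j) : ℝ))

variable {A : ι → Finset V}

lemma intersectionGraph_adj {i j : ι} :
    (intersectionGraph A).Adj i j ↔ i ≠ j ∧ (A i ∩ A j).Nonempty := by
  simp [intersectionGraph, inter_comm (A j)]

lemma nonempty_of_intersectionGraph_connected [Fintype ι] {k : ℕ} (hk : 1 < k)
    (hreg : ∀ v, #{i | v ∈ A i} = k) (hconn : (intersectionGraph A).Connected) (v : V) (i : ι) :
    (A i).Nonempty := by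
  have : Nontrivial ι := Fintype.one_lt_card_iff_nontrivial.mp <|
    hk.trans_le ((hreg v).symm.trans_le (card_filter_le _ _))
  obtain ⟨j, hij⟩ := hconn.preconnected.exists_adj_of_nontrivial i
  exact (intersectionGraph_adj.mp hij).2.mono inter_subset_left

lemma dist_intersectionGraph_le_card [Fintype V] (hconn : (intersectionGraph A).Connected)
    (i j : ι) : (intersectionGraph A).dist i j ≤ Fintype.card V := by
  obtain ⟨p, hp, hlen⟩ := hconn.exists_path_of_dist i j
  set B : ℕ → Finset V := fun t => A (p.getVert t) ∩ A (p.getVert (t + 1))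
  have hB : ∀ t < p.length, (B t).Nonempty := fun t ht =>
    (intersectionGraph_adj.mp (p.adj_getVert_succ ht)).2
  -- a common element of two non-consecutive steps would give a shortcut
  have hdisj : ((range p.length : Set ℕ)).PairwiseDisjoint B := by
    suffices ∀ t s, t < s → s < p.length → Disjoint (B t) (B s) from fun t ht s hs hts =>
      hts.lt_or_gt.elim (fun h => this t s h (by simpa using hs))
        (fun h => (this s t h (by simpa using ht)).symm)
    intro t s hts hs
    refine Finset.disjoint_left.mpr fun x hxt hxs => ?_
    have hne : p.getVert t ≠ p.getVert (s + 1) := fun h => by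
      have := hp.getVert_injOn (by simp; omega) (by simp; omega) h
      omega
    exact p.not_adj_getVert_of_length_eq_dist hlen (by omega) hs <|
      intersectionGraph_adj.mpr
        ⟨hne, x, mem_inter.mpr ⟨(mem_inter.mp hxt).1, (mem_inter.mp hxs).2⟩⟩
  calc (intersectionGraph A).dist i j = ∑ t ∈ range p.length, 1 := by simp [hlen]
    _ ≤ ∑ t ∈ range p.length, #(B t) :=
      sum_le_sum fun t ht => card_pos.mpr (hB t (mem_range.mp ht))
    _ = #((range p.length).biUnion B) := (card_biUnion hdisj).symm
    _ ≤ Fintype.card V := card_le_univ _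

lemma sq_sub_le_card_mul_sum_sum [Fintype V] [Fintype ι]
    (hconn : (intersectionGraph A).Connected) (y : ι → ℝ) (i j : ι) :
    (y i - y j) ^ 2 ≤
      Fintype.card V * ((∑ a, ∑ b, (#(A a ∩ A b) : ℝ) * (y a - y b) ^ 2) / 2) := by
  obtain ⟨p, hp, hlen⟩ := hconn.exists_path_of_dist i j
  have hsteps : ∑ t ∈ range p.length, (y (p.getVert t) - y (p.getVert (t + 1))) ^ 2 ≤
      (∑ a, ∑ b, (#(A a ∩ A b) : ℝ) * (y a - y b) ^ 2) / 2 := by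
    rw [le_div_iff₀ two_pos, mul_comm]
    refine (mul_le_mul_of_nonneg_left (sum_le_sum fun t ht => ?_) two_pos.le).trans
      (hp.two_mul_sum_le (fun a b => by positivity) fun a b => by rw [inter_comm, sub_sq_comm])
    have : (1 : ℝ) ≤ #(A (p.getVert t) ∩ A (p.getVert (t + 1))) := by
      exact_mod_cast card_pos.mpr
        (intersectionGraph_adj.mp (p.adj_getVert_succ (mem_range.mp ht))).2
    exact le_mul_of_one_le_left (sq_nonneg _) this
  calc (y i - y j) ^ 2
      ≤ p.length * ∑ t ∈ range p.length, (y (p.getVert t) - y (p.getVert (t + 1))) ^ 2 :=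
        p.sq_sub_le_length_mul_sum_sq y
    _ ≤ Fintype.card V * ((∑ a, ∑ b, (#(A a ∩ A b) : ℝ) * (y a - y b) ^ 2) / 2) :=
        mul_le_mul (by exact_mod_cast hlen ▸ dist_intersectionGraph_le_card hconn i j) hsteps
          (sum_nonneg fun _ _ => sq_nonneg _) (Nat.cast_nonneg _)

lemma sum_card_inter_eq [Fintype ι] {k : ℕ} (hreg : ∀ v, #{i | v ∈ A i} = k) (s : Finset V) :
    ∑ i, #(s ∩ A i) = k * #s := by
  classical
  have := sum_card_bipartiteAbove_eq_sum_card_bipartiteBelow (fun i v => v ∈ A i)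
    (s := univ) (t := s)
  simp only [bipartiteAbove, bipartiteBelow, filter_mem_eq_inter, hreg] at this
  simp [this, mul_comm]

lemma card_mul_card_le_sum_sum_card_inter [Fintype ι] [DecidableEq ι] (U : Finset ι) (v : V) :
    #{i ∈ U | v ∈ A i} * #{j ∈ Uᶜ | v ∈ A j} ≤ ∑ i ∈ U, ∑ j ∈ Uᶜ, #(A i ∩ A j) :=
  calc #{i ∈ U | v ∈ A i} * #{j ∈ Uᶜ | v ∈ A j}
      = ∑ i ∈ U with v ∈ A i, ∑ j ∈ Uᶜ with v ∈ A j, 1 := by simp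
    _ ≤ ∑ i ∈ U with v ∈ A i, ∑ j ∈ Uᶜ with v ∈ A j, #(A i ∩ A j) :=
      sum_le_sum fun i hi => sum_le_sum fun j hj =>
        card_pos.mpr ⟨v, mem_inter.mpr ⟨(mem_filter.mp hi).2, (mem_filter.mp hj).2⟩⟩
    _ ≤ ∑ i ∈ U, ∑ j ∈ Uᶜ, #(A i ∩ A j) :=
      (sum_le_sum fun _ _ => sum_le_sum_of_subset (filter_subset _ _)).trans
        (sum_le_sum_of_subset (filter_subset _ _))

lemma card_filter_compl_eq [Fintype ι] [DecidableEq ι] {k : ℕ}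
    (hreg : ∀ v, #{i | v ∈ A i} = k) (U : Finset ι) (v : V) :
    #{j ∈ Uᶜ | v ∈ A j} = k - #{i ∈ U | v ∈ A i} := by
  have : #{i ∈ U | v ∈ A i} + #{j ∈ Uᶜ | v ∈ A j} = k := by
    rw [← card_union_of_disjoint (disjoint_filter_filter disjoint_compl_right), ← filter_union,
      union_compl, hreg]
  omega

lemma sum_mul_cellLaplacian_mul [Fintype ι] [DecidableEq ι] {k : ℕ} (hk : k ≠ 1)
    (hreg : ∀ v, #{i | v ∈ A i} = k) (hA : ∀ i, (A i).Nonempty) {x y : ι → ℝ}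
    (hxy : ∀ i, x i = √(#(A i) : ℝ) * y i) :
    ∑ i, ∑ j, x i * cellLaplacian A k i j * x j =
      (∑ i, ∑ j, (#(A i ∩ A j) : ℝ) * (y i - y j) ^ 2) / (2 * ((k : ℝ) - 1)) := by
  have hk' : (k : ℝ) - 1 ≠ 0 := sub_ne_zero.mpr (by exact_mod_cast hk)
  have hsqrt i : 0 < √(#(A i) : ℝ) := Real.sqrt_pos.mpr (by exact_mod_cast (hA i).card_pos)
  have hterm i j : x i * cellLaplacian A k i j * x j =
      (if i = j then (#(A i) : ℝ) * y i ^ 2 else 0) * (k / (k - 1))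
        - (#(A i ∩ A j) : ℝ) * y i * y j / (k - 1) := by
    rw [cellLaplacian, hxy, hxy]
    split_ifs with h
    · subst h
      rw [inter_self]
      have := Real.mul_self_sqrt (Nat.cast_nonneg (α := ℝ) #(A i))
      field_simp
      linear_combination y i ^ 2 * this
    · rw [Real.sqrt_mul (Nat.cast_nonneg _)]
      field_simp [(hsqrt i).ne', (hsqrt j).ne']
      ring
  have hrow i : ∑ j, (#(A i ∩ A j) : ℝ) = k * #(A i) := by
    exact_mod_cast sum_card_inter_eq hreg (A i)
  rw [sum_sum_mul_sub_sq (fun i j => by rw [inter_comm])]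
  simp only [hterm, sum_sub_distrib, ← sum_mul, sum_ite_eq, mem_univ, if_true, hrow, ← sum_div]
  field_simp
  simp only [mul_assoc, ← mul_sum]
  ring

lemma two_div_mul_sum_sq_le_sum_mul_cellLaplacian_mul [Fintype V] [Fintype ι] [DecidableEq ι]
    {k : ℕ} (hk : 2 ≤ k) (hreg : ∀ v, #{i | v ∈ A i} = k)
    (hconn : (intersectionGraph A).Connected) {x : ι → ℝ}
    (hx : ∑ i, √(#(A i) : ℝ) * x i = 0) :
    2 / ((k : ℝ) ^ 2 * (Fintype.card V : ℝ) ^ 2) * ∑ i, x i ^ 2 ≤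
      ∑ i, ∑ j, x i * cellLaplacian A k i j * x j := by
  rcases isEmpty_or_nonempty V with hV | hV
  · simpa [cellLaplacian, eq_empty_of_isEmpty] using sum_nonneg fun i _ => mul_self_nonneg (x i)
  obtain ⟨v⟩ := hV
  have hA := nonempty_of_intersectionGraph_connected hk hreg hconn v
  have hsqrt i : 0 < √(#(A i) : ℝ) := Real.sqrt_pos.mpr (by exact_mod_cast (hA i).card_pos)
  obtain ⟨y, hxy⟩ : ∃ y : ι → ℝ, ∀ i, x i = √(#(A i) : ℝ) * y i :=
    ⟨fun i => x i / √(#(A i) : ℝ), fun i => (mul_div_cancel₀ _ (hsqrt i).ne').symm⟩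
  set Q := ∑ i, ∑ j, (#(A i ∩ A j) : ℝ) * (y i - y j) ^ 2
  have hQ : 0 ≤ Q := sum_nonneg fun i _ => sum_nonneg fun j _ => by positivity
  have hsq : ∑ i, x i ^ 2 = ∑ i, (#(A i) : ℝ) * y i ^ 2 := by
    simp_rw [hxy, mul_pow, Real.sq_sqrt (Nat.cast_nonneg _)]
  have hmean : ∑ i, (#(A i) : ℝ) * y i = 0 := by
    simp_rw [← hx, hxy, ← mul_assoc, Real.mul_self_sqrt (Nat.cast_nonneg _)]
  have htotal : ∑ i, (#(A i) : ℝ) = k * Fintype.card V := by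
    have := sum_card_inter_eq hreg (univ : Finset V)
    simp only [univ_inter, card_univ] at this
    exact_mod_cast this
  have hpoinc := two_mul_sum_mul_sq_le (fun i => Nat.cast_nonneg #(A i)) hmean
    (sq_sub_le_card_mul_sum_sum hconn y)
  rw [htotal, ← hsq] at hpoinc
  have hk0 : (2 : ℝ) ≤ k := by exact_mod_cast hk
  have hn0 : (0 : ℝ) < Fintype.card V := by exact_mod_cast Fintype.card_pos_iff.mpr ⟨v⟩
  rw [sum_mul_cellLaplacian_mul (by omega) hreg hA hxy]
  calc 2 / ((k : ℝ) ^ 2 * (Fintype.card V : ℝ) ^ 2) * ∑ i, x i ^ 2 ≤ Q / (2 * k) := by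
        rw [div_mul_eq_mul_div, div_le_div_iff₀ (by positivity) (by positivity)]
        nlinarith [hpoinc, mul_pos (mul_pos hn0 hn0) (by positivity : (0 : ℝ) < k)]
    _ ≤ Q / (2 * ((k : ℝ) - 1)) := div_le_div_of_nonneg_left hQ (by linarith) (by linarith)

end CellIntersection

theorem stmt_17_general {V ι : Type*} [Fintype V] [Fintype ι] [DecidableEq ι]
    [DecidableEq V]
    (A : ι → Finset V) (k : ℕ) (hk : 2 ≤ k)
    (hreg : ∀ v : V, (Finset.univ.filter fun i => v ∈ A i).card = k)
    (hconn : (SimpleGraph.fromRel fun i j : ι => (A i ∩ A j).Nonempty).Connected)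
    (L : ι → ι → ℝ)
    (hL : ∀ i j, L i j = if i = j then 1
      else -(1 / ((k : ℝ) - 1)) * ((A i ∩ A j).card : ℝ) /
            Real.sqrt (((A i).card : ℝ) * ((A j).card : ℝ))) :
    (∀ U : Finset ι, U.Nonempty → U ≠ Finset.univ →
      ∀ v : V, ∀ m : ℕ, m = (U.filter fun i => v ∈ A i).card →
        1 ≤ m → m ≤ k - 1 →
          ((m * (k - m) : ℕ) : ℝ) ≤ ∑ i ∈ U, ∑ j ∈ Uᶜ, ((A i ∩ A j).card : ℝ) ∧
          ((k : ℝ) - 1 ≤ ((m * (k - m) : ℕ) : ℝ))) ∧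
    (∀ x : ι → ℝ, (∑ i : ι, Real.sqrt ((A i).card : ℝ) * x i = 0) →
      (2 / ((k : ℝ) ^ 2 * (Fintype.card V : ℝ) ^ 2)) * ∑ i : ι, (x i) ^ 2
        ≤ ∑ i : ι, ∑ j : ι, x i * L i j * x j) := by
  obtain rfl : L = cellLaplacian A k := funext₂ hL
  refine ⟨fun U _ _ v m hm h1 h2 => ⟨?_, ?_⟩,
    fun x hx => two_div_mul_sum_sq_le_sum_mul_cellLaplacian_mul hk hreg hconn hx⟩
  · have hcut := card_mul_card_le_sum_sum_card_inter (A := A) U v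
    rw [card_filter_compl_eq hreg, ← hm] at hcut
    exact_mod_cast hcut
  · rw [← Nat.cast_pred (by omega)]
    exact Nat.cast_le.mpr (Nat.sub_one_le_mul_sub h1 h2)

/-- in the connected cell-intersection graph (vertices: cells
`A i`, edge weights `|A i ∩ A j|`, every element of `V` in exactly `k` cells),
every nontrivial cut splitting the `k` cells containing a common element `v`
into groups of sizes `m` and `k-m` has weight at least `m(k-m) ≥ k-1`, and the
second-smallest eigenvalue of the normalized Laplacian (characterized by the
Rayleigh quotient over vectors orthogonal to the `√|Aᵢ|` vector) satisfies
`λ₂ ≥ 2/(k²|V|²)`. -/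
theorem stmt_17 {V ι : Type*} [Fintype V] [Fintype ι] [DecidableEq ι]
    [Nonempty ι] [DecidableEq V]
    (A : ι → Finset V) (k : ℕ) (hk : 2 ≤ k)
    (hreg : ∀ v : V, (Finset.univ.filter fun i => v ∈ A i).card = k)
    (hconn : (SimpleGraph.fromRel fun i j : ι => (A i ∩ A j).Nonempty).Connected)
    (L : ι → ι → ℝ)
    (hL : ∀ i j, L i j = if i = j then 1
      else -(1 / ((k : ℝ) - 1)) * ((A i ∩ A j).card : ℝ) /
            Real.sqrt (((A i).card : ℝ) * ((A j).card : ℝ))) :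
    (∀ U : Finset ι, U.Nonempty → U ≠ Finset.univ →
      ∀ v : V, ∀ m : ℕ, m = (U.filter fun i => v ∈ A i).card →
        1 ≤ m → m ≤ k - 1 →
          ((m * (k - m) : ℕ) : ℝ) ≤ ∑ i ∈ U, ∑ j ∈ Uᶜ, ((A i ∩ A j).card : ℝ) ∧
          ((k : ℝ) - 1 ≤ ((m * (k - m) : ℕ) : ℝ))) ∧
    (∀ x : ι → ℝ, (∑ i : ι, Real.sqrt ((A i).card : ℝ) * x i = 0) →
      (2 / ((k : ℝ) ^ 2 * (Fintype.card V : ℝ) ^ 2)) * ∑ i : ι, (x i) ^ 2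
        ≤ ∑ i : ι, ∑ j : ι, x i * L i j * x j) :=
  stmt_17_general A k hk hreg hconn L hL
end
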